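/- arXiv:2206.13364 — 10 statements merged into one kernel-verified Lean document; each statement's English description precedes it below -/
import Mathlib

section
/- Let f : ℝ → ℝ be a bounded continuous function, and suppose there exist an integer m ≥ 1 and rational functions R_0, …, R_{m−1} (each a quotient p/q of real polynomials with q nowhere vanishing on ℝ) such that f(x)^m + R_{m−1}(x)·f(x)^{m−1} + … + R_0(x) = 0 for every x ∈ ℝ. Then f(x) converges to a finite limit as x → +∞, and f(x) also converges to a finite limit as x → −∞. -/
/-!
Clearing denominators puts the graph of `f` on a curve `P(x, y) = 0` with `P ≠ 0`. A value `c`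
taken by `f` at infinitely many points makes `x ↦ P(x, c)` vanish identically, which happens for
only finitely many `c`. If `f` had no limit at `+∞`, then by the intermediate value theorem every
value strictly between `liminf f` and `limsup f` would be taken at arbitrarily large `x`, hence
infinitely often: infinitely many such `c`, a contradiction. Reflecting `x ↦ -x` handles `-∞`.
-/

open Filter Set Polynomial Polynomial.Bivariate

namespace Polynomial.Bivariate

variable {R : Type*} [CommRing R]

theorem eval_C_eq_map_swap (c : R) (P : R[X][Y]) :
    P.eval (C c) = (swap P).map (evalRingHom c) := by
  simpa [aeval_def, eval₂_eq_eval_map, map_map] using aveal_eq_map_swap c P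

variable [IsDomain R] {P : R[X][Y]}

theorem finite_setOf_eval_C_eq_zero (hP : P ≠ 0) :
    {c : R | P.eval (C c) = 0}.Finite := by
  have hS : (swap P).leadingCoeff ≠ 0 := by simpa using hP
  refine (finite_setOfPred_isRoot hS).subset fun c (hc : P.eval (C c) = 0) => ?_
  have hcoeff := congrArg (coeff · (swap P).natDegree) hc
  simpa [eval_C_eq_map_swap, coeff_map] using hcoeff

theorem finite_setOf_infinite_fiber (hP : P ≠ 0) {f : R → R}
    (hf : ∀ x, P.evalEval x (f x) = 0) : {c | {x | f x = c}.Infinite}.Finite := by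
  refine (finite_setOf_eval_C_eq_zero hP).subset fun c (hc : {x | f x = c}.Infinite) => ?_
  refine eq_zero_of_infinite_isRoot _ (hc.mono fun x (hx : f x = c) => ?_)
  simpa [hx] using hf x

end Polynomial.Bivariate

theorem exists_evalEval_eq_zero_of_sum_div_eq_zero {K : Type*} [Field K] {m : ℕ}
    {p q : Fin m → K[X]} (hq : ∀ i x, (q i).eval x ≠ 0) {f : K → K}
    (hf : ∀ x, f x ^ m + ∑ i : Fin m, (p i).eval x / (q i).eval x * f x ^ (i : ℕ) = 0) :
    ∃ P : K[X][Y], P ≠ 0 ∧ ∀ x, P.evalEval x (f x) = 0 := by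
  set Q := ∏ i, q i
  refine ⟨C Q * Y ^ m + ∑ i : Fin m, C (p i * ∏ j ∈ Finset.univ.erase i, q j) * Y ^ (i : ℕ),
    fun hP => ?_, fun x => ?_⟩
  · have hQ : Q ≠ 0 := Finset.prod_ne_zero_iff.mpr fun i _ hi => hq i 0 (by simp [hi])
    have hcoeff := congrArg (coeff · m) hP
    simp only [coeff_add, finsetSum_coeff, coeff_C_mul_X_pow] at hcoeff
    exact hQ (by simpa [fun i : Fin m => i.isLt.ne'] using hcoeff)
  · have hQx : ∀ i, Q.eval x = (q i).eval x * (∏ j ∈ Finset.univ.erase i, q j).eval x :=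
      fun i => by rw [← eval_mul, Finset.mul_prod_erase _ _ (Finset.mem_univ i)]
    have hcleared := congrArg (Q.eval x * ·) (hf x)
    simp only [mul_add, Finset.mul_sum, mul_zero] at hcleared
    simp only [evalEval, eval_add, eval_mul, eval_C, eval_pow, eval_X, eval_finsetSum]
    rw [← hcleared]
    congr 1
    refine Finset.sum_congr rfl fun i _ => ?_
    rw [hQx i]
    field_simp [hq i x]

section OscillationAtTop

variable {α : Type*} [ConditionallyCompleteLinearOrder α] [TopologicalSpace α] [OrderTopology α]
  [DenselyOrdered α]

theorem frequently_eq_of_frequently_lt_of_frequently_gt {δ : Type*} [LinearOrder δ]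
    [TopologicalSpace δ] [OrderClosedTopology δ] {f : α → δ} {c : δ} (hf : Continuous f)
    (hlt : ∃ᶠ x in atTop, f x < c) (hgt : ∃ᶠ x in atTop, c < f x) :
    ∃ᶠ x in atTop, f x = c := by
  refine frequently_atTop.mpr fun b => ?_
  obtain ⟨x₁, hx₁b, hx₁⟩ := frequently_atTop.mp hlt b
  obtain ⟨x₂, hx₂b, hx₂⟩ := frequently_atTop.mp hgt b
  obtain ⟨x, hxb, hx⟩ := isPreconnected_Ici.intermediate_value (mem_Ici.mpr hx₁b)
    (mem_Ici.mpr hx₂b) hf.continuousOn ⟨hx₁.le, hx₂.le⟩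
  exact ⟨x, hxb, hx⟩

theorem exists_tendsto_atTop_of_finite_setOf_frequently_eq [Nonempty α] {f : α → ℝ}
    (hf : Continuous f) (hb : Bornology.IsBounded (range f))
    (hS : {c | ∃ᶠ x in atTop, f x = c}.Finite) : ∃ c, Tendsto f atTop (nhds c) := by
  have hle : IsBoundedUnder (· ≤ ·) atTop f := hb.bddAbove.isBoundedUnder_of_range
  have hge : IsBoundedUnder (· ≥ ·) atTop f := hb.bddBelow.isBoundedUnder_of_range
  suffices liminf f atTop = limsup f atTop from ⟨_, tendsto_of_liminf_eq_limsup this rfl hle hge⟩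
  refine (liminf_le_limsup hle hge).antisymm (not_lt.mp fun hlt => ?_)
  refine Ioo_infinite hlt (hS.subset fun c hc => ?_)
  exact frequently_eq_of_frequently_lt_of_frequently_gt hf
    (frequently_lt_of_liminf_lt hle.isCoboundedUnder_ge hc.1)
    (frequently_lt_of_lt_limsup hge.isCoboundedUnder_le hc.2)

end OscillationAtTop

theorem bounded_continuous_algebraic_has_limits_general
    (f : ℝ → ℝ) (hf_cont : Continuous f)
    (hf_bdd : ∃ C : ℝ, ∀ x : ℝ, |f x| ≤ C)
    (m : ℕ)
    (p q : Fin m → Polynomial ℝ)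
    (hq : ∀ i : Fin m, ∀ x : ℝ, (q i).eval x ≠ 0)
    (halg : ∀ x : ℝ,
      f x ^ m + ∑ i : Fin m, ((p i).eval x / (q i).eval x) * f x ^ (i : ℕ) = 0) :
    (∃ c : ℝ, Filter.Tendsto f Filter.atTop (nhds c)) ∧
    (∃ c : ℝ, Filter.Tendsto f Filter.atBot (nhds c)) := by
  obtain ⟨P, hP, hPf⟩ := exists_evalEval_eq_zero_of_sum_div_eq_zero hq halg
  have hfin := finite_setOf_infinite_fiber hP hPf
  obtain ⟨C, hC⟩ := hf_bdd
  have hb : Bornology.IsBounded (range f) :=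
    isBounded_iff_forall_norm_le.mpr ⟨C, forall_mem_range.mpr hC⟩
  have hfreq_atTop : {c | ∃ᶠ x in atTop, f x = c}.Finite := hfin.subset fun c hc =>
    frequently_cofinite_iff_infinite.mp (hc.filter_mono atTop_le_cofinite)
  have hfreq_atBot : {c | ∃ᶠ x in atTop, f (-x) = c}.Finite := hfin.subset fun c hc =>
    frequently_cofinite_iff_infinite.mp
      ((tendsto_neg_atTop_atBot.frequently (p := (f · = c)) hc).filter_mono atBot_le_cofinite)
  refine ⟨exists_tendsto_atTop_of_finite_setOf_frequently_eq hf_cont hb hfreq_atTop, ?_⟩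
  obtain ⟨c, hc⟩ := exists_tendsto_atTop_of_finite_setOf_frequently_eq (f := fun x => f (-x))
    (hf_cont.comp continuous_neg) (hb.subset (range_comp_subset_range _ _)) hfreq_atBot
  exact ⟨c, by simpa [Function.comp_def] using hc.comp tendsto_neg_atBot_atTop⟩

/-- A bounded continuous real function satisfying a monic polynomial
equation with rational-function coefficients (denominators nowhere vanishing on ℝ)
has finite limits at +∞ and at −∞. -/
theorem bounded_continuous_algebraic_has_limits
    (f : ℝ → ℝ) (hf_cont : Continuous f)
    (hf_bdd : ∃ C : ℝ, ∀ x : ℝ, |f x| ≤ C)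
    (m : ℕ) (hm : 1 ≤ m)
    (p q : Fin m → Polynomial ℝ)
    (hq : ∀ i : Fin m, ∀ x : ℝ, (q i).eval x ≠ 0)
    (halg : ∀ x : ℝ,
      f x ^ m + ∑ i : Fin m, ((p i).eval x / (q i).eval x) * f x ^ (i : ℕ) = 0) :
    (∃ c : ℝ, Filter.Tendsto f Filter.atTop (nhds c)) ∧
    (∃ c : ℝ, Filter.Tendsto f Filter.atBot (nhds c)) :=
  bounded_continuous_algebraic_has_limits_general f hf_cont hf_bdd m p q hq halg
end

section
/- Fix positive real parameters K1, K2, K3, Nx, Ny, Nz and a ligand concentration L ≥ 0. If positive reals (x, y, z) form a steady state of the IL-7R model, then: (i) K1·z² + (1 + K1·(Nx − Nz))·z − Nz = 0; (ii) K2·(K3·L + 1)·y² + (1 + K2·(K3·L + 1)·(Nx − Ny))·y − Ny = 0; and (iii) Nx·x = (Nx − Ny + y)·(Nx − Nz + z). -/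
/-!
With `κ := K2 * (K3 * L + 1)`, the conservation law for `x` factors as
`Nx = x * (1 + K1 * z) * (1 + κ * y)`, and subtracting the other two laws isolates the factors:
`Nx - Ny + y = x * (1 + K1 * z)` and `Nx - Nz + z = x * (1 + κ * y)`. Multiplying these gives (iii).
The laws for `Ny` and `Nz` read `Ny = y * (1 + κ * x * (1 + K1 * z))` and
`Nz = z * (1 + K1 * x * (1 + κ * y))`; substituting the factors turns them into the quadratics
(ii) and (i).
-/

/-- The steady-state polynomial system of the IL-7R model at ligand concentration `L`. -/
def IL7RSteadyState (K1 K2 K3 Nx Ny Nz L x y z : ℝ) : Prop :=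
  Nx = x + K1*x*z + K2*x*y + K1*K2*x*y*z + K2*K3*L*x*y + K1*K2*K3*L*x*y*z ∧
  Ny = y + K2*x*y + K1*K2*x*y*z + K2*K3*L*x*y + K1*K2*K3*L*x*y*z ∧
  Nz = z + K1*x*z + K1*K2*x*y*z + K1*K2*K3*L*x*y*z

namespace IL7RSteadyState

variable {K1 K2 K3 Nx Ny Nz L x y z : ℝ}

theorem Nx_eq (h : IL7RSteadyState K1 K2 K3 Nx Ny Nz L x y z) :
    Nx = x * (1 + K1 * z) * (1 + K2 * (K3 * L + 1) * y) := by
  rw [h.1]; ring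

theorem Ny_eq (h : IL7RSteadyState K1 K2 K3 Nx Ny Nz L x y z) :
    Ny = y * (1 + K2 * (K3 * L + 1) * x * (1 + K1 * z)) := by
  rw [h.2.1]; ring

theorem Nz_eq (h : IL7RSteadyState K1 K2 K3 Nx Ny Nz L x y z) :
    Nz = z * (1 + K1 * x * (1 + K2 * (K3 * L + 1) * y)) := by
  rw [h.2.2]; ring

theorem sub_add_y_eq (h : IL7RSteadyState K1 K2 K3 Nx Ny Nz L x y z) :
    Nx - Ny + y = x * (1 + K1 * z) := by
  rw [h.1, h.2.1]; ring

theorem sub_add_z_eq (h : IL7RSteadyState K1 K2 K3 Nx Ny Nz L x y z) :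
    Nx - Nz + z = x * (1 + K2 * (K3 * L + 1) * y) := by
  rw [h.1, h.2.2]; ring

end IL7RSteadyState

theorem il7r_groebner_relations_general
    (K1 K2 K3 Nx Ny Nz L x y z : ℝ)
    (hss : IL7RSteadyState K1 K2 K3 Nx Ny Nz L x y z) :
    K1*z^2 + (1 + K1*(Nx - Nz))*z - Nz = 0 ∧
    K2*(K3*L + 1)*y^2 + (1 + K2*(K3*L + 1)*(Nx - Ny))*y - Ny = 0 ∧
    Nx * x = (Nx - Ny + y) * (Nx - Nz + z) := by
  have hy := hss.sub_add_y_eq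
  have hz := hss.sub_add_z_eq
  refine ⟨?_, ?_, ?_⟩
  · linear_combination K1 * z * hz - hss.Nz_eq
  · linear_combination K2 * (K3 * L + 1) * y * hy - hss.Ny_eq
  · rw [hy, hz, hss.Nx_eq]; ring

/-- any positive steady state of the IL-7R model satisfies the
triangular (Gröbner basis) relations. -/
theorem il7r_groebner_relations
    (K1 K2 K3 Nx Ny Nz L x y z : ℝ)
    (hK1 : 0 < K1) (hK2 : 0 < K2) (hK3 : 0 < K3)
    (hNx : 0 < Nx) (hNy : 0 < Ny) (hNz : 0 < Nz)
    (hL : 0 ≤ L) (hx : 0 < x) (hy : 0 < y) (hz : 0 < z)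
    (hss : IL7RSteadyState K1 K2 K3 Nx Ny Nz L x y z) :
    K1*z^2 + (1 + K1*(Nx - Nz))*z - Nz = 0 ∧
    K2*(K3*L + 1)*y^2 + (1 + K2*(K3*L + 1)*(Nx - Ny))*y - Ny = 0 ∧
    Nx * x = (Nx - Ny + y) * (Nx - Nz + z) :=
  il7r_groebner_relations_general K1 K2 K3 Nx Ny Nz L x y z hss
end

section
/- Fix positive real parameters K1, K2, K3, Nx, Ny, Nz. For every ligand concentration L ≥ 0, the reals z*, y*(L), x*(L) given by the explicit formulas are strictly positive, and the triple (x*(L), y*(L), z*) is a steady state of the IL-7R model at ligand concentration L. -/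
noncomputable def delta1 (K1 Nx Nz : ℝ) : ℝ := 4*K1*Nz + (K1*(Nx - Nz) + 1)^2

noncomputable def zstar (K1 Nx Nz : ℝ) : ℝ :=
  (-1 + K1*(Nz - Nx) + Real.sqrt (delta1 K1 Nx Nz)) / (2*K1)

noncomputable def delta2 (K2 K3 Nx Ny L : ℝ) : ℝ :=
  4*K2*Ny*(K3*L + 1) + (K2*(Nx - Ny)*(K3*L + 1) + 1)^2

noncomputable def ystar (K2 K3 Nx Ny L : ℝ) : ℝ :=
  (-1 + K2*(Ny - Nx)*(K3*L + 1) + Real.sqrt (delta2 K2 K3 Nx Ny L)) / (2*K2*(K3*L + 1))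

noncomputable def xstar (K1 K2 K3 Nx Ny Nz L : ℝ) : ℝ :=
  (Nx - Ny + ystar K2 K3 Nx Ny L) / (1 + K1 * zstar K1 Nx Nz)

/-!
With `M = K3 L + 1` the three equations factor as
`Nx = x (1 + K1 z) (1 + K2 M y)`, `Ny = y (1 + K2 M u)`, `Nz = z (1 + K1 v)`,
where `u = x (1 + K1 z)` and `v = x (1 + K2 M y)`; also `Nx = u (1 + K2 M y) = v (1 + K1 z)`.
So both `(u, y)` and `(v, z)` solve a single binding equilibrium `A = a (1 + K b)`,
`B = b (1 + K a)`, whose unique positive solution is `a = A - B + b` with `b` the positive root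
of `K b² + (1 + K (A - B)) b - B`. This is how `y*` (with `K = K2 M`) and `z*` (with `K = K1`)
arise, and `x* = u / (1 + K1 z*)`.
-/

/-- The positive root of `K b² + (1 + K (A - B)) b - B`. -/
noncomputable def bindingRoot (K A B : ℝ) : ℝ :=
  (-1 + K*(B - A) + Real.sqrt (4*K*B + (K*(A - B) + 1)^2)) / (2*K)

section bindingRoot

variable {K A B : ℝ}

theorem bindingRoot_mul_eq (hK : 0 < K) (hB : 0 ≤ B) :
    bindingRoot K A B * (1 + K * (A - B + bindingRoot K A B)) = B := by
  have hsq := Real.sq_sqrt (by positivity : 0 ≤ 4*K*B + (K*(A - B) + 1)^2)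
  unfold bindingRoot
  generalize Real.sqrt _ = s at hsq ⊢
  field_simp
  linear_combination hsq

theorem sub_add_bindingRoot_mul_eq (hK : 0 < K) (hB : 0 ≤ B) :
    (A - B + bindingRoot K A B) * (1 + K * bindingRoot K A B) = A := by
  linear_combination bindingRoot_mul_eq (A := A) hK hB

theorem bindingRoot_pos (hK : 0 < K) (hB : 0 < B) : 0 < bindingRoot K A B := by
  have hlt : K*(A - B) + 1 < Real.sqrt (4*K*B + (K*(A - B) + 1)^2) :=
    Real.lt_sqrt_of_sq_lt (by nlinarith [mul_pos hK hB])
  unfold bindingRoot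
  apply div_pos _ (by positivity)
  linarith

theorem sub_add_bindingRoot_pos (hK : 0 < K) (hA : 0 < A) (hB : 0 < B) :
    0 < A - B + bindingRoot K A B := by
  have h := sub_add_bindingRoot_mul_eq (A := A) hK hB.le
  have : 0 < 1 + K * bindingRoot K A B := by have := bindingRoot_pos (A := A) hK hB; positivity
  exact pos_of_mul_pos_left (by rwa [h]) this.le

end bindingRoot

theorem zstar_eq_bindingRoot (K1 Nx Nz : ℝ) : zstar K1 Nx Nz = bindingRoot K1 Nx Nz := rfl

theorem ystar_eq_bindingRoot (K2 K3 Nx Ny L : ℝ) :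
    ystar K2 K3 Nx Ny L = bindingRoot (K2 * (K3*L + 1)) Nx Ny := by
  unfold ystar delta2 bindingRoot
  ring_nf

theorem il7rSteadyState_of_factored {K1 K2 K3 Nx Ny Nz L x y z : ℝ}
    (hx : Nx = x * (1 + K1*z) * (1 + K2*(K3*L + 1)*y))
    (hy : Ny = y * (1 + K2*(K3*L + 1) * (x * (1 + K1*z))))
    (hz : Nz = z * (1 + K1 * (x * (1 + K2*(K3*L + 1)*y)))) :
    IL7RSteadyState K1 K2 K3 Nx Ny Nz L x y z :=
  ⟨by linear_combination hx, by linear_combination hy, by linear_combination hz⟩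

/-- the explicit formulas give a positive steady state of the IL-7R model
for every ligand concentration `L ≥ 0`. -/
theorem il7r_explicit_steady_state
    (K1 K2 K3 Nx Ny Nz : ℝ)
    (hK1 : 0 < K1) (hK2 : 0 < K2) (hK3 : 0 < K3)
    (hNx : 0 < Nx) (hNy : 0 < Ny) (hNz : 0 < Nz) :
    ∀ L : ℝ, 0 ≤ L →
      0 < zstar K1 Nx Nz ∧
      0 < ystar K2 K3 Nx Ny L ∧
      0 < xstar K1 K2 K3 Nx Ny Nz L ∧
      IL7RSteadyState K1 K2 K3 Nx Ny Nz L
        (xstar K1 K2 K3 Nx Ny Nz L) (ystar K2 K3 Nx Ny L) (zstar K1 Nx Nz) := by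
  intro L hL
  have hK : 0 < K2 * (K3*L + 1) := by positivity
  rw [ystar_eq_bindingRoot, zstar_eq_bindingRoot]
  have hy0 := bindingRoot_pos (A := Nx) hK hNy
  have hz0 := bindingRoot_pos (A := Nx) hK1 hNz
  have hy := bindingRoot_mul_eq (A := Nx) hK hNy.le
  have hu := sub_add_bindingRoot_mul_eq (A := Nx) hK hNy.le
  have hz := bindingRoot_mul_eq (A := Nx) hK1 hNz.le
  have hv := sub_add_bindingRoot_mul_eq (A := Nx) hK1 hNz.le
  have hxdef : xstar K1 K2 K3 Nx Ny Nz L =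
      (Nx - Ny + bindingRoot (K2 * (K3*L + 1)) Nx Ny) / (1 + K1 * bindingRoot K1 Nx Nz) := by
    rw [xstar, ystar_eq_bindingRoot, zstar_eq_bindingRoot]
  set y := bindingRoot (K2 * (K3*L + 1)) Nx Ny
  set z := bindingRoot K1 Nx Nz
  set x := xstar K1 K2 K3 Nx Ny Nz L
  have hP : 0 < 1 + K1 * z := by positivity
  have hxu : x * (1 + K1 * z) = Nx - Ny + y := by rw [hxdef]; exact div_mul_cancel₀ _ hP.ne'
  have hxv : x * (1 + K2 * (K3*L + 1) * y) = Nx - Nz + z :=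
    mul_right_cancel₀ hP.ne' (by linear_combination hu - hv + (1 + K2 * (K3*L + 1) * y) * hxu)
  refine ⟨hz0, hy0, ?_, il7rSteadyState_of_factored ?_ ?_ ?_⟩
  · exact hxdef ▸ div_pos (sub_add_bindingRoot_pos hK hNx hNy) hP
  · rw [hxu, hu]
  · rw [hxu, hy]
  · rw [hxv, hz]
end

section
/- Fix positive real parameters K1, K2, K3, Nx, Ny, Nz and a ligand concentration L ≥ 0. If positive reals (x, y, z) form a steady state of the IL-7R model, then the number of signalling complexes satisfies K1·K2·K3·L·x·y·z = (K1·z/(1 + K1·z))·(K3·L/(1 + K3·L))·(Ny − y). -/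
theorem IL7RSteadyState.Ny_sub_y_eq {K1 K2 K3 Nx Ny Nz L x y z : ℝ}
    (hss : IL7RSteadyState K1 K2 K3 Nx Ny Nz L x y z) :
    Ny - y = K2*x*y * ((1 + K1*z) * (1 + K3*L)) := by
  rw [hss.2.1]
  ring

theorem il7r_signalling_factorisation_general
    (K1 K2 K3 Nx Ny Nz L x y z : ℝ)
    (hK1 : 0 < K1) (hK3 : 0 < K3)
    (hL : 0 ≤ L) (hz : 0 < z)
    (hss : IL7RSteadyState K1 K2 K3 Nx Ny Nz L x y z) :
    K1*K2*K3*L*x*y*z = (K1*z/(1 + K1*z)) * (K3*L/(1 + K3*L)) * (Ny - y) := by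
  have hz' : 1 + K1*z ≠ 0 := by positivity
  have hL' : 1 + K3*L ≠ 0 := by positivity
  rw [hss.Ny_sub_y_eq]
  field_simp

/-- at any positive steady state of the IL-7R model, the number of
signalling complexes factorises as stated. -/
theorem il7r_signalling_factorisation
    (K1 K2 K3 Nx Ny Nz L x y z : ℝ)
    (hK1 : 0 < K1) (hK2 : 0 < K2) (hK3 : 0 < K3)
    (hNx : 0 < Nx) (hNy : 0 < Ny) (hNz : 0 < Nz)
    (hL : 0 ≤ L) (hx : 0 < x) (hy : 0 < y) (hz : 0 < z)
    (hss : IL7RSteadyState K1 K2 K3 Nx Ny Nz L x y z) :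
    K1*K2*K3*L*x*y*z = (K1*z/(1 + K1*z)) * (K3*L/(1 + K3*L)) * (Ny - y) :=
  il7r_signalling_factorisation_general K1 K2 K3 Nx Ny Nz L x y z hK1 hK3 hL hz hss
end

section
/- Fix positive real parameters K1, K2, K3, Nx, Ny, Nz and define z*, y*(L), x*(L) by the explicit formulas. Then the signalling function σ(L) = K1·K2·K3·L·x*(L)·y*(L)·z* converges, as L → +∞, to the amplitude A = min(Nx, Ny)·K1·z*/(1 + K1·z*). -/
open Filter Topology

noncomputable def signalling (K1 K2 K3 Nx Ny Nz L : ℝ) : ℝ :=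
  K1*K2*K3*L * xstar K1 K2 K3 Nx Ny Nz L * ystar K2 K3 Nx Ny L * zstar K1 Nx Nz

noncomputable def ystarInv (K2 Nx Ny t : ℝ) : ℝ :=
  (Real.sqrt ((K2*(Nx - Ny) + t)^2 + 4*K2*Ny*t) - (K2*(Nx - Ny) + t)) / (2*K2)

section

variable {K1 K2 K3 Nx Ny Nz L t : ℝ}

theorem ystar_eq_ystarInv (hM : 0 < K3*L + 1) :
    ystar K2 K3 Nx Ny L = ystarInv K2 Nx Ny (K3*L + 1)⁻¹ := by
  have hdelta : delta2 K2 K3 Nx Ny L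
      = (K3*L + 1)^2 * ((K2*(Nx - Ny) + (K3*L + 1)⁻¹)^2 + 4*K2*Ny*(K3*L + 1)⁻¹) := by
    unfold delta2
    field_simp
    ring
  rw [ystar, ystarInv, hdelta, Real.sqrt_mul (sq_nonneg _), Real.sqrt_sq hM.le]
  field_simp
  ring

theorem ystarInv_quadratic (hK2 : K2 ≠ 0) (hdisc : 0 ≤ K2*Ny*t) :
    K2 * ystarInv K2 Nx Ny t * (Nx - Ny + ystarInv K2 Nx Ny t)
      = t * (Ny - ystarInv K2 Nx Ny t) := by
  have hsq := Real.sq_sqrt (by nlinarith [sq_nonneg (K2*(Nx - Ny) + t)] :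
    0 ≤ (K2*(Nx - Ny) + t)^2 + 4*K2*Ny*t)
  unfold ystarInv
  set s := Real.sqrt ((K2*(Nx - Ny) + t)^2 + 4*K2*Ny*t)
  field_simp
  linear_combination hsq

@[fun_prop]
theorem continuous_ystarInv : Continuous (ystarInv K2 Nx Ny) := by
  unfold ystarInv
  fun_prop

theorem sub_ystarInv_zero (hK2 : 0 < K2) : Ny - ystarInv K2 Nx Ny 0 = min Nx Ny := by
  rw [ystarInv, mul_zero, add_zero, add_zero, Real.sqrt_sq_eq_abs]
  rcases le_total Nx Ny with h | h
  · rw [abs_of_nonpos (by nlinarith), min_eq_left h]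
    field_simp
    ring
  · rw [abs_of_nonneg (by nlinarith), min_eq_right h]
    simp

theorem signalling_eq_ystarInv (hK2 : 0 < K2) (hNy : 0 ≤ Ny) (hM : 0 < K3*L + 1) :
    signalling K1 K2 K3 Nx Ny Nz L
      = K1 * zstar K1 Nx Nz / (1 + K1 * zstar K1 Nx Nz)
        * ((1 - (K3*L + 1)⁻¹) * (Ny - ystarInv K2 Nx Ny (K3*L + 1)⁻¹)) := by
  rw [signalling, xstar, ystar_eq_ystarInv hM]
  set y := ystarInv K2 Nx Ny (K3*L + 1)⁻¹
  have hquad : K2 * y * (Nx - Ny + y) = (K3*L + 1)⁻¹ * (Ny - y) :=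
    ystarInv_quadratic hK2.ne' (by positivity)
  calc K1*K2*K3*L * ((Nx - Ny + y) / (1 + K1 * zstar K1 Nx Nz)) * y * zstar K1 Nx Nz
      = K1 * zstar K1 Nx Nz / (1 + K1 * zstar K1 Nx Nz)
          * (K3*L * (K2 * y * (Nx - Ny + y))) := by ring
    _ = _ := by rw [hquad]; field_simp; ring

end

theorem il7r_signalling_tendsto_amplitude_general
    (K1 K2 K3 Nx Ny Nz : ℝ)
    (hK2 : 0 < K2) (hK3 : 0 < K3)
    (hNy : 0 < Ny) :
    Filter.Tendsto
      (fun L : ℝ => K1*K2*K3*L * xstar K1 K2 K3 Nx Ny Nz L * ystar K2 K3 Nx Ny L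
        * zstar K1 Nx Nz)
      Filter.atTop
      (nhds (min Nx Ny * K1 * zstar K1 Nx Nz / (1 + K1 * zstar K1 Nx Nz))) := by
  set c := K1 * zstar K1 Nx Nz / (1 + K1 * zstar K1 Nx Nz)
  have hinv : Tendsto (fun L => (K3*L + 1)⁻¹) atTop (𝓝 0) :=
    (tendsto_atTop_add_const_right _ 1 (tendsto_id.const_mul_atTop hK3)).inv_tendsto_atTop
  have hcont : Continuous fun t => c * ((1 - t) * (Ny - ystarInv K2 Nx Ny t)) := by
    fun_prop
  have hamplitude : c * ((1 - 0) * (Ny - ystarInv K2 Nx Ny 0))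
      = min Nx Ny * K1 * zstar K1 Nx Nz / (1 + K1 * zstar K1 Nx Nz) := by
    rw [sub_ystarInv_zero hK2]
    ring
  have hlim := (hcont.tendsto 0).comp hinv
  rw [hamplitude] at hlim
  show Tendsto (signalling K1 K2 K3 Nx Ny Nz) atTop _
  refine hlim.congr' ?_
  filter_upwards [eventually_ge_atTop 0] with L hL
  exact (signalling_eq_ystarInv hK2 hNy.le (by positivity)).symm

/-- the signalling function of the IL-7R model converges, as `L → +∞`,
to the amplitude `min(Nx,Ny)·K1·z*/(1 + K1·z*)`. -/
theorem il7r_signalling_tendsto_amplitude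
    (K1 K2 K3 Nx Ny Nz : ℝ)
    (hK1 : 0 < K1) (hK2 : 0 < K2) (hK3 : 0 < K3)
    (hNx : 0 < Nx) (hNy : 0 < Ny) (hNz : 0 < Nz) :
    Filter.Tendsto
      (fun L : ℝ => K1*K2*K3*L * xstar K1 K2 K3 Nx Ny Nz L * ystar K2 K3 Nx Ny L
        * zstar K1 Nx Nz)
      Filter.atTop
      (nhds (min Nx Ny * K1 * zstar K1 Nx Nz / (1 + K1 * zstar K1 Nx Nz))) :=
  il7r_signalling_tendsto_amplitude_general K1 K2 K3 Nx Ny Nz hK2 hK3 hNy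
end

section
/- Fix positive real parameters K1, K2, K3, Nx, Ny, Nz, set M = min(Nx, Ny), and define L50 = M·(1 + K2·(Nx + Ny − M) + √(1 + K2²·(Ny − Nx)² + 2·K2·(Nx + Ny − M)))/(K2·K3·(M − 2·Nx)·(M − 2·Ny)). Then L50 > 0, and the signalling function evaluated at L50 equals half the amplitude: K1·K2·K3·L50·x*(L50)·y*(L50)·z* = (1/2)·M·K1·z*/(1 + K1·z*). -/
/-- The explicit EC₅₀ expression for the IL-7R model, with `M = min Nx Ny`. -/
noncomputable def L50 (K2 K3 Nx Ny : ℝ) : ℝ :=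
  min Nx Ny *
    (1 + K2*(Nx + Ny - min Nx Ny)
      + Real.sqrt (1 + K2^2*(Ny - Nx)^2 + 2*K2*(Nx + Ny - min Nx Ny)))
    / (K2*K3*(min Nx Ny - 2*Nx)*(min Nx Ny - 2*Ny))

/-!
Write `u = K3·L`. The steady state `y = y*(L)` is the positive root of the binding equation
`K2·(u + 1)·y·(Nx − Ny + y) = Ny − y`, and `σ(L) = K2·u·(Nx − Ny + y)·y · K1z*/(1 + K1z*)`.
So `σ(L) = A/2` means `K2·u·(Nx − Ny + y)·y = M/2`; with the binding equation this forces
`y = Ny − M(u + 1)/(2u)`, and substituting back leaves the quadratic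
`K2(M − 2Nx)(M − 2Ny)·u² − 2M(1 + K2(Nx + Ny − M))·u + K2·M² = 0`, whose larger root is `K3·L50`.
At that root the candidate `y` is positive, hence it is `y*(L50)`.
-/

open Real

section BindingEquation

variable {K2 K3 Nx Ny L y : ℝ}

lemma delta2_eq_sq_of_root (h : K2*(K3*L + 1)*y*(Nx - Ny + y) = Ny - y) :
    delta2 K2 K3 Nx Ny L = (2*K2*(K3*L + 1)*y + K2*(Nx - Ny)*(K3*L + 1) + 1)^2 := by
  rw [delta2]
  linear_combination (-4*K2*(K3*L + 1)) * h

lemma ystar_eq_of_root (ha : 0 < K2*(K3*L + 1)) (hNy : 0 ≤ Ny) (hy : 0 < y)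
    (h : K2*(K3*L + 1)*y*(Nx - Ny + y) = Ny - y) :
    ystar K2 K3 Nx Ny L = y := by
  have hb : 0 ≤ K2*(K3*L + 1)*y + K2*(Nx - Ny)*(K3*L + 1) + 1 := by
    have hprod : y*(K2*(K3*L + 1)*y + K2*(Nx - Ny)*(K3*L + 1) + 1) = Ny := by
      linear_combination h
    exact nonneg_of_mul_nonneg_right (hprod.symm ▸ hNy) hy
  have hsqrt : 0 ≤ 2*K2*(K3*L + 1)*y + K2*(Nx - Ny)*(K3*L + 1) + 1 := by
    nlinarith [mul_pos ha hy]
  have hden : 2*K2*(K3*L + 1) ≠ 0 := by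
    rw [mul_assoc]
    exact (mul_pos two_pos ha).ne'
  rw [ystar, delta2_eq_sq_of_root h, sqrt_sq hsqrt, div_eq_iff hden]
  ring

end BindingEquation

lemma signalling_eq (K1 K2 K3 Nx Ny Nz L : ℝ) :
    K1*K2*K3*L * xstar K1 K2 K3 Nx Ny Nz L * ystar K2 K3 Nx Ny L * zstar K1 Nx Nz
      = K2*(K3*L)*(Nx - Ny + ystar K2 K3 Nx Ny L)*ystar K2 K3 Nx Ny L
        * (K1*zstar K1 Nx Nz / (1 + K1*zstar K1 Nx Nz)) := by
  rw [xstar]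
  ring

section HalfLevel

variable {K2 Nx Ny M u : ℝ}

lemma binding_eq_of_factored (hu : u ≠ 0)
    (h : K2*(2*u*Nx - M*(u + 1))*(2*u*Ny - M*(u + 1)) = 2*M*u) :
    K2*(u + 1)*(Ny - M*(u + 1)/(2*u))*(Nx - Ny + (Ny - M*(u + 1)/(2*u)))
      = Ny - (Ny - M*(u + 1)/(2*u)) := by
  field_simp
  linear_combination (u + 1) * h

lemma half_eq_of_factored (hu : u ≠ 0)
    (h : K2*(2*u*Nx - M*(u + 1))*(2*u*Ny - M*(u + 1)) = 2*M*u) :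
    K2*u*(Nx - Ny + (Ny - M*(u + 1)/(2*u)))*(Ny - M*(u + 1)/(2*u)) = M/2 := by
  field_simp
  linear_combination h

end HalfLevel

section RootOfL50

variable {K2 Nx Ny M S u : ℝ}

lemma sub_two_mul_mul_sub_two_mul_pos (hM : 0 < M) (hMx : M ≤ Nx) (hMy : M ≤ Ny) :
    0 < (M - 2*Nx)*(M - 2*Ny) :=
  mul_pos_of_neg_of_neg (by linarith) (by linarith)

/-- The discriminant of the quadratic in `u` is `(2MS)²`, since
`(Nx + Ny − M)² − (2Nx − M)(2Ny − M) = (Nx − Ny)²`. -/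
lemma factored_eq_of_root (hD : K2*((M - 2*Nx)*(M - 2*Ny)) ≠ 0)
    (hS : S^2 = 1 + K2^2*(Ny - Nx)^2 + 2*K2*(Nx + Ny - M))
    (hu : K2*((M - 2*Nx)*(M - 2*Ny))*u = M*(1 + K2*(Nx + Ny - M) + S)) :
    K2*(2*u*Nx - M*(u + 1))*(2*u*Ny - M*(u + 1)) = 2*M*u := by
  apply mul_left_cancel₀ hD
  linear_combination (K2*((M - 2*Nx)*(M - 2*Ny))*u + M*(S - 1 - K2*(Nx + Ny - M))) * hu
    + M^2 * hS

lemma pos_of_root (hK2 : 0 < K2) (hM : 0 < M) (hMx : M ≤ Nx) (hMy : M ≤ Ny) (hS0 : 0 ≤ S)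
    (hu : K2*((M - 2*Nx)*(M - 2*Ny))*u = M*(1 + K2*(Nx + Ny - M) + S)) :
    0 < u := by
  have hD : 0 < K2*((M - 2*Nx)*(M - 2*Ny)) :=
    mul_pos hK2 (sub_two_mul_mul_sub_two_mul_pos hM hMx hMy)
  have hP : 0 ≤ K2*(Nx + Ny - M) := mul_nonneg hK2.le (by linarith)
  exact pos_of_mul_pos_right (hu ▸ mul_pos hM (by linarith)) hD.le

lemma sub_div_pos_of_root (hK2 : 0 < K2) (hM : 0 < M) (hMx : M ≤ Nx) (hMy : M ≤ Ny)
    (hS0 : 0 ≤ S) (hS : S^2 = 1 + K2^2*(Ny - Nx)^2 + 2*K2*(Nx + Ny - M))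
    (hu : K2*((M - 2*Nx)*(M - 2*Ny))*u = M*(1 + K2*(Nx + Ny - M) + S)) :
    0 < Ny - M*(u + 1)/(2*u) := by
  have hu0 := pos_of_root hK2 hM hMx hMy hS0 hu
  have hS_ge : K2*(Nx - Ny) ≤ S := by
    refine abs_le_of_sq_le_sq' ?_ hS0 |>.2
    nlinarith [mul_pos hK2 hM]
  have hD : 0 < K2*((M - 2*Nx)*(M - 2*Ny)) :=
    mul_pos hK2 (sub_two_mul_mul_sub_two_mul_pos hM hMx hMy)
  have key : K2*((M - 2*Nx)*(M - 2*Ny))*(2*u*Ny - M*(u + 1))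
      = M*(2*Ny - M)*(1 + S - K2*(Nx - Ny)) := by
    linear_combination (2*Ny - M) * hu
  have hrhs : 0 < M*(2*Ny - M)*(1 + S - K2*(Nx - Ny)) :=
    mul_pos (mul_pos hM (by linarith)) (by linarith)
  have hnum : 0 < 2*u*Ny - M*(u + 1) := pos_of_mul_pos_right (key ▸ hrhs) hD.le
  rw [sub_pos, div_lt_iff₀ (by linarith)]
  linarith

end RootOfL50

lemma mul_K3_mul_L50_eq {K2 K3 Nx Ny : ℝ} (hK3 : K3 ≠ 0)
    (hD : K2*((min Nx Ny - 2*Nx)*(min Nx Ny - 2*Ny)) ≠ 0) :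
    K2*((min Nx Ny - 2*Nx)*(min Nx Ny - 2*Ny))*(K3 * L50 K2 K3 Nx Ny)
      = min Nx Ny * (1 + K2*(Nx + Ny - min Nx Ny)
          + √(1 + K2^2*(Ny - Nx)^2 + 2*K2*(Nx + Ny - min Nx Ny))) := by
  rw [L50, mul_div_assoc', mul_div_assoc', div_eq_iff]
  · ring
  · convert mul_ne_zero hK3 hD using 1
    ring

theorem il7r_ec50_general
    (K1 K2 K3 Nx Ny Nz : ℝ)
    (hK2 : 0 < K2) (hK3 : 0 < K3)
    (hNx : 0 < Nx) (hNy : 0 < Ny) :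
    0 < L50 K2 K3 Nx Ny ∧
    K1*K2*K3*(L50 K2 K3 Nx Ny)
        * xstar K1 K2 K3 Nx Ny Nz (L50 K2 K3 Nx Ny)
        * ystar K2 K3 Nx Ny (L50 K2 K3 Nx Ny)
        * zstar K1 Nx Nz
      = (1/2) * (min Nx Ny) * K1 * zstar K1 Nx Nz / (1 + K1 * zstar K1 Nx Nz) := by
  have hM : 0 < min Nx Ny := lt_min hNx hNy
  have hMx : min Nx Ny ≤ Nx := min_le_left _ _
  have hMy : min Nx Ny ≤ Ny := min_le_right _ _
  set M := min Nx Ny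
  have hS : (√(1 + K2^2*(Ny - Nx)^2 + 2*K2*(Nx + Ny - M)))^2
      = 1 + K2^2*(Ny - Nx)^2 + 2*K2*(Nx + Ny - M) := sq_sqrt (by nlinarith)
  have hD : 0 < K2*((M - 2*Nx)*(M - 2*Ny)) :=
    mul_pos hK2 (sub_two_mul_mul_sub_two_mul_pos hM hMx hMy)
  have hu := mul_K3_mul_L50_eq hK3.ne' hD.ne'
  set u := K3 * L50 K2 K3 Nx Ny
  have hu0 : 0 < u := pos_of_root hK2 hM hMx hMy (sqrt_nonneg _) hu
  refine ⟨pos_of_mul_pos_right hu0 hK3.le, ?_⟩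
  have hfac := factored_eq_of_root hD.ne' hS hu
  have hy : ystar K2 K3 Nx Ny (L50 K2 K3 Nx Ny) = Ny - M*(u + 1)/(2*u) :=
    ystar_eq_of_root (mul_pos hK2 (by linarith)) hNy.le
      (sub_div_pos_of_root hK2 hM hMx hMy (sqrt_nonneg _) hS hu)
      (binding_eq_of_factored hu0.ne' hfac)
  rw [signalling_eq, hy, half_eq_of_factored hu0.ne' hfac]
  ring

/-- `L50 > 0` and the signalling function evaluated at `L50` equals
half the amplitude. -/
theorem il7r_ec50
    (K1 K2 K3 Nx Ny Nz : ℝ)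
    (hK1 : 0 < K1) (hK2 : 0 < K2) (hK3 : 0 < K3)
    (hNx : 0 < Nx) (hNy : 0 < Ny) (hNz : 0 < Nz) :
    0 < L50 K2 K3 Nx Ny ∧
    K1*K2*K3*(L50 K2 K3 Nx Ny)
        * xstar K1 K2 K3 Nx Ny Nz (L50 K2 K3 Nx Ny)
        * ystar K2 K3 Nx Ny (L50 K2 K3 Nx Ny)
        * zstar K1 Nx Nz
      = (1/2) * (min Nx Ny) * K1 * zstar K1 Nx Nz / (1 + K1 * zstar K1 Nx Nz) :=
  il7r_ec50_general K1 K2 K3 Nx Ny Nz hK2 hK3 hNx hNy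
end

section
/- Let K2, K3, K4, Nx, Ny, Nw be positive reals with Nx > Ny. Then the quadratic polynomial K2²·K3²·(Ny − Nx)·t² + K2·K3·Ny·(1 + K4·(Nw − Nx + Ny))·t + K4·Ny² in the variable t has exactly one positive real root, namely t* = Ny·(1 + K4·(Nw − Nx + Ny) + √(1 + 2·K4·(Nw + Nx − Ny) + K4²·(Nw − Nx + Ny)²))/(2·K2·K3·(Nx − Ny)). -/
/-!
The quadratic has negative leading coefficient and positive constant term, so the product of
its roots is negative: exactly one root is positive, namely `(-b - √Δ) / (2a)`. Its discriminant
is `(K2 K3 Ny)² D` with `D = (1 + K4 (Nw - Nx + Ny))² + 4 K4 (Nx - Ny)`, which turns the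
quadratic formula into the closed form of the statement.
-/

section NegLeadingQuadratic

variable {a b c s : ℝ}

lemma abs_lt_of_discrim_eq_mul_self (ha : a < 0) (hc : 0 < c) (hs : 0 ≤ s)
    (h : discrim a b c = s * s) : |b| < s := by
  rw [discrim] at h
  have hbs : b ^ 2 < s ^ 2 := by nlinarith [mul_neg_of_neg_of_pos ha hc]
  exact abs_lt_of_sq_lt_sq hbs hs

lemma quadratic_eq_zero_and_pos_iff (ha : a < 0) (hc : 0 < c) (hs : 0 ≤ s)
    (h : discrim a b c = s * s) (x : ℝ) :
    a * x ^ 2 + b * x + c = 0 ∧ 0 < x ↔ x = (-b - s) / (2 * a) := by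
  have hbs := abs_lt_of_discrim_eq_mul_self ha hc hs h
  have h2a : 2 * a < 0 := by linarith
  have hpos : 0 < (-b - s) / (2 * a) :=
    div_pos_of_neg_of_neg (by linarith [neg_le_abs b]) h2a
  have hneg : (-b + s) / (2 * a) < 0 :=
    div_neg_of_pos_of_neg (by linarith [le_abs_self b]) h2a
  rw [sq, quadratic_eq_zero_iff ha.ne h]
  constructor
  · rintro ⟨hx | hx, hxpos⟩
    · exact absurd hxpos (hx ▸ hneg).not_gt
    · exact hx
  · rintro rfl
    exact ⟨Or.inr rfl, hpos⟩

end NegLeadingQuadratic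

theorem quadratic_unique_positive_root_general
    (K2 K3 K4 Nx Ny Nw : ℝ)
    (hK2 : 0 < K2) (hK3 : 0 < K3) (hK4 : 0 < K4)
    (hNy : 0 < Ny)
    (hNxNy : Nx > Ny) :
    0 < Ny*(1 + K4*(Nw - Nx + Ny)
        + Real.sqrt (1 + 2*K4*(Nw + Nx - Ny) + K4^2*(Nw - Nx + Ny)^2))
        / (2*K2*K3*(Nx - Ny)) ∧
    (K2^2*K3^2*(Ny - Nx)
        * (Ny*(1 + K4*(Nw - Nx + Ny)
            + Real.sqrt (1 + 2*K4*(Nw + Nx - Ny) + K4^2*(Nw - Nx + Ny)^2))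
            / (2*K2*K3*(Nx - Ny)))^2
      + K2*K3*Ny*(1 + K4*(Nw - Nx + Ny))
        * (Ny*(1 + K4*(Nw - Nx + Ny)
            + Real.sqrt (1 + 2*K4*(Nw + Nx - Ny) + K4^2*(Nw - Nx + Ny)^2))
            / (2*K2*K3*(Nx - Ny)))
      + K4*Ny^2 = 0) ∧
    ∀ t : ℝ, 0 < t →
      K2^2*K3^2*(Ny - Nx)*t^2 + K2*K3*Ny*(1 + K4*(Nw - Nx + Ny))*t + K4*Ny^2 = 0 →
      t = Ny*(1 + K4*(Nw - Nx + Ny)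
            + Real.sqrt (1 + 2*K4*(Nw + Nx - Ny) + K4^2*(Nw - Nx + Ny)^2))
            / (2*K2*K3*(Nx - Ny)) := by
  set D := 1 + 2*K4*(Nw + Nx - Ny) + K4^2*(Nw - Nx + Ny)^2 with hD_def
  set t₀ := Ny*(1 + K4*(Nw - Nx + Ny) + Real.sqrt D) / (2*K2*K3*(Nx - Ny))
  have hNxNy' : 0 < Nx - Ny := sub_pos.mpr hNxNy
  have hD : 0 ≤ D := by nlinarith [sq_nonneg (1 + K4*(Nw - Nx + Ny))]
  have hdisc : discrim (K2^2*K3^2*(Ny - Nx)) (K2*K3*Ny*(1 + K4*(Nw - Nx + Ny))) (K4*Ny^2)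
      = (K2*K3*Ny*Real.sqrt D) * (K2*K3*Ny*Real.sqrt D) := by
    rw [mul_mul_mul_comm, Real.mul_self_sqrt hD, discrim, hD_def]
    ring
  have hA : K2^2*K3^2*(Ny - Nx) < 0 := mul_neg_of_pos_of_neg (by positivity) (by linarith)
  have ht₀ : t₀ = (-(K2*K3*Ny*(1 + K4*(Nw - Nx + Ny))) - K2*K3*Ny*Real.sqrt D)
      / (2*(K2^2*K3^2*(Ny - Nx))) := by
    rw [div_eq_div_iff (by positivity) (mul_neg_of_pos_of_neg two_pos hA).ne]
    ring
  have hroot := quadratic_eq_zero_and_pos_iff hA (by positivity) (by positivity) hdisc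
  obtain ⟨ht₀_root, ht₀_pos⟩ := (hroot t₀).mpr ht₀
  exact ⟨ht₀_pos, ht₀_root, fun t ht h => ((hroot t).mp ⟨h, ht⟩).trans ht₀.symm⟩

/-- the leading-order quadratic from the perturbation expansion of the
extended IL-7R model has exactly one positive real root, given explicitly. -/
theorem quadratic_unique_positive_root
    (K2 K3 K4 Nx Ny Nw : ℝ)
    (hK2 : 0 < K2) (hK3 : 0 < K3) (hK4 : 0 < K4)
    (hNx : 0 < Nx) (hNy : 0 < Ny) (hNw : 0 < Nw)
    (hNxNy : Nx > Ny) :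
    0 < Ny*(1 + K4*(Nw - Nx + Ny)
        + Real.sqrt (1 + 2*K4*(Nw + Nx - Ny) + K4^2*(Nw - Nx + Ny)^2))
        / (2*K2*K3*(Nx - Ny)) ∧
    (K2^2*K3^2*(Ny - Nx)
        * (Ny*(1 + K4*(Nw - Nx + Ny)
            + Real.sqrt (1 + 2*K4*(Nw + Nx - Ny) + K4^2*(Nw - Nx + Ny)^2))
            / (2*K2*K3*(Nx - Ny)))^2
      + K2*K3*Ny*(1 + K4*(Nw - Nx + Ny))
        * (Ny*(1 + K4*(Nw - Nx + Ny)
            + Real.sqrt (1 + 2*K4*(Nw + Nx - Ny) + K4^2*(Nw - Nx + Ny)^2))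
            / (2*K2*K3*(Nx - Ny)))
      + K4*Ny^2 = 0) ∧
    ∀ t : ℝ, 0 < t →
      K2^2*K3^2*(Ny - Nx)*t^2 + K2*K3*Ny*(1 + K4*(Nw - Nx + Ny))*t + K4*Ny^2 = 0 →
      t = Ny*(1 + K4*(Nw - Nx + Ny)
            + Real.sqrt (1 + 2*K4*(Nw + Nx - Ny) + K4^2*(Nw - Nx + Ny)^2))
            / (2*K2*K3*(Nx - Ny)) :=
  quadratic_unique_positive_root_general K2 K3 K4 Nx Ny Nw hK2 hK3 hK4 hNy hNxNy
end

section
/- Fix positive real parameters K1, K2, K3, K4, Nx, Ny, Nz, Nw. Suppose x, y, z, w : (0, ∞) → (0, ∞) are continuous functions such that for every L > 0 the quadruple (x(L), y(L), z(L), w(L)) is a steady state of the extended IL-7R model at ligand concentration L, and suppose y is bounded and algebraic on (0, ∞). Then z is constant, equal to z̄ = (−1 + K1·(Nz − Nx) + √((1 + K1·(Nx − Nz))² + 4·K1·Nz))/(2·K1), and the signalling function σ(L) = K1·K2·K3·L·x(L)·y(L)·z(L) converges, as L → +∞, to min(Nx, Ny)·K1·z̄/(1 + K1·z̄). -/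
/-!
Subtracting `(1 + K₁z)` times the `Nz` equation from `K₁z` times the `Nx` equation leaves a
quadratic in `z` alone, whose only positive root is `z̄`. For `y`, the `Nx` and `Ny` equations give
`K₂(1 + K₃L) · y (Nx - Ny + y) = (1 + K₄w)(Ny - y)`, whose right side stays bounded, so
`y (Nx - Ny + y) → 0`. An algebraic function takes each of all but finitely many values only
finitely often, while a continuous function oscillating at infinity takes every value between its
`liminf` and `limsup` infinitely often; so `y` converges, to some `ℓ ≥ 0` with
`ℓ (Nx - Ny + ℓ) = 0` and `Nx - Ny + ℓ ≥ 0`, i.e. `Ny - ℓ = min Nx Ny`. Finally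
`σ = (Ny - y) · K₁z̄/(1 + K₁z̄) · K₃L/(1 + K₃L)`.
-/

open Filter Polynomial Set Topology

/-- The steady-state polynomial system of the extended IL-7R model at ligand
concentration `L`. -/
def ExtIL7RSteadyState (K1 K2 K3 K4 Nx Ny Nz Nw L x y z w : ℝ) : Prop :=
  Nx = x + K2*x*y + K1*x*z + K1*K2*x*y*z + K2*K3*L*x*y + K1*K2*K3*L*x*y*z
        + K4*x*w + K1*K4*x*w*z ∧
  Ny = y + K2*x*y + K1*K2*x*y*z + K2*K3*L*x*y + K1*K2*K3*L*x*y*z ∧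
  Nz = z + K1*x*z + K1*K2*x*y*z + K1*K2*K3*L*x*y*z + K1*K4*x*w*z ∧
  Nw = w + K4*x*w + K1*K4*x*w*z

/-- `f` is an algebraic function on `(0, ∞)`: it satisfies a monic polynomial equation
whose coefficients are rational functions with denominators nowhere vanishing
on `(0, ∞)`. -/
def AlgebraicOnIoi (f : ℝ → ℝ) : Prop :=
  ∃ m : ℕ, 1 ≤ m ∧ ∃ p q : Fin m → Polynomial ℝ,
    (∀ i : Fin m, ∀ L : ℝ, 0 < L → (q i).eval L ≠ 0) ∧
    ∀ L : ℝ, 0 < L →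
      f L ^ m + ∑ i : Fin m, ((p i).eval L / (q i).eval L) * f L ^ (i : ℕ) = 0

lemma eq_quadratic_root_of_pos {a b c t : ℝ} (ha : 0 < a) (hc : 0 ≤ c) (ht : 0 < t)
    (h : a * t ^ 2 + b * t = c) : t = (-b + √(b ^ 2 + 4 * a * c)) / (2 * a) := by
  have hroot : 0 ≤ 2 * a * t + b := by nlinarith
  have hsqrt : √(b ^ 2 + 4 * a * c) = 2 * a * t + b := by
    rw [← Real.sqrt_sq hroot, ← h]
    ring_nf
  rw [hsqrt]
  field_simp
  ring

lemma sub_eq_min_of_mul_eq_zero {a b ℓ : ℝ} (hℓ : 0 ≤ ℓ) (hab : 0 ≤ a - b + ℓ)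
    (h : ℓ * (a - b + ℓ) = 0) : b - ℓ = min a b := by
  rcases mul_eq_zero.1 h with h | h
  · rw [min_eq_right (by linarith), h, sub_zero]
  · rw [min_eq_left (by linarith)]
    linarith

lemma tendsto_mul_div_one_add_mul_atTop {k : ℝ} (hk : 0 < k) :
    Tendsto (fun L : ℝ => k * L / (1 + k * L)) atTop (𝓝 1) := by
  have hden : Tendsto (fun L : ℝ => 1 + k * L) atTop atTop :=
    tendsto_atTop_add_const_left _ 1 (tendsto_id.const_mul_atTop hk)
  have h : Tendsto (fun L : ℝ => 1 - 1 / (1 + k * L)) atTop (𝓝 (1 - 0)) :=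
    tendsto_const_nhds.sub (tendsto_const_nhds.div_atTop hden)
  rw [sub_zero] at h
  refine h.congr' ?_
  filter_upwards [hden.eventually_gt_atTop 0] with L hL
  field_simp
  ring

lemma Polynomial.exists_eval_eq_prod_mul_sum_div {K ι : Type*} [Field K] (s : Finset ι)
    (a b : ι → K[X]) :
    ∃ D : K[X], ∀ L : K, (∀ i ∈ s, (b i).eval L ≠ 0) →
      D.eval L = (∏ i ∈ s, (b i).eval L) * ∑ i ∈ s, (a i).eval L / (b i).eval L := by
  classical
  refine ⟨∑ i ∈ s, a i * ∏ j ∈ s.erase i, b j, fun L hL => ?_⟩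
  simp only [eval_finsetSum, eval_mul, eval_prod, Finset.mul_sum]
  refine Finset.sum_congr rfl fun i hi => ?_
  rw [← Finset.mul_prod_erase s _ hi]
  field_simp [hL i hi]

lemma AlgebraicOnIoi.finite_setOf_infinite_level {f : ℝ → ℝ} (hf : AlgebraicOnIoi f) :
    {c : ℝ | {L : ℝ | 0 < L ∧ f L = c}.Infinite}.Finite := by
  obtain ⟨m, -, p, q, hq, hroot⟩ := hf
  set r : Fin m → ℝ → ℝ := fun i L => (p i).eval L / (q i).eval L
  have hQ : ∀ L, 0 < L → ∏ i, (q i).eval L ≠ 0 := fun L hL =>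
    Finset.prod_ne_zero_iff.2 fun i _ => hq i L hL
  -- Cleared of denominators, the equation for a value `c` is a polynomial identity in `L`; if it
  -- holds for infinitely many `L`, it holds at `L = 1`, so `c` is a root of `P`.
  set P : ℝ[X] := X ^ m + ∑ i : Fin m, C (r i 1) * X ^ (i : ℕ)
  have hP : P ≠ 0 := (monic_X_pow_add (degree_sum_fin_lt _)).ne_zero
  refine (finite_setOfPred_isRoot hP).subset fun c hc => ?_
  obtain ⟨D, hD⟩ :=
    exists_eval_eq_prod_mul_sum_div Finset.univ (fun i : Fin m => C (c ^ (i : ℕ)) * p i) q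
  have hDc : ∀ L, 0 < L → (C (c ^ m) * ∏ i, q i + D).eval L =
      (∏ i, (q i).eval L) * (c ^ m + ∑ i, r i L * c ^ (i : ℕ)) := by
    intro L hL
    rw [eval_add, eval_mul, eval_C, eval_prod, hD L fun i _ => hq i L hL, mul_add,
      mul_comm (c ^ m)]
    congr 1
    refine congrArg _ (Finset.sum_congr rfl fun i _ => ?_)
    rw [eval_mul, eval_C, mul_div_assoc, mul_comm]
  have hzero : C (c ^ m) * ∏ i, q i + D = 0 := by
    refine eq_zero_of_infinite_isRoot _ (hc.mono ?_)
    rintro L ⟨hL, rfl⟩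
    rw [mem_ofPred_eq, IsRoot.def, hDc L hL]
    exact mul_eq_zero_of_right _ (hroot L hL)
  have h1 := hDc 1 one_pos
  rw [hzero, eval_zero, eq_comm, mul_eq_zero] at h1
  simpa [P, eval_finsetSum] using h1.resolve_left (hQ 1 one_pos)

lemma ContinuousOn.infinite_level_of_frequently {f : ℝ → ℝ} {a c : ℝ}
    (hf : ContinuousOn f (Ioi a)) (hlt : ∃ᶠ L in atTop, f L < c) (hgt : ∃ᶠ L in atTop, c < f L) :
    {L : ℝ | a < L ∧ f L = c}.Infinite := by
  refine infinite_of_not_bddAbove fun ⟨M, hM⟩ => ?_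
  obtain ⟨L₁, hfL₁, hL₁⟩ := (hlt.and_eventually (eventually_gt_atTop (max M a))).exists
  obtain ⟨L₂, hfL₂, hL₂⟩ := (hgt.and_eventually (eventually_gt_atTop L₁)).exists
  have hsub : Icc L₁ L₂ ⊆ Ioi a := fun t ht => (le_max_right M a).trans_lt (hL₁.trans_le ht.1)
  obtain ⟨L, hL, hfL⟩ :=
    intermediate_value_Icc hL₂.le (hf.mono hsub) ⟨hfL₁.le, hfL₂.le⟩
  have hML : M < L := (le_max_left M a).trans_lt (hL₁.trans_le hL.1)
  exact hML.not_ge (hM ⟨hsub hL, hfL⟩)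

lemma exists_tendsto_of_finite_setOf_infinite_level {f : ℝ → ℝ} (hf : ContinuousOn f (Ioi 0))
    (hbdd : ∃ C, ∀ L, 0 < L → |f L| ≤ C)
    (hfin : {c : ℝ | {L : ℝ | 0 < L ∧ f L = c}.Infinite}.Finite) :
    ∃ ℓ, Tendsto f atTop (𝓝 ℓ) := by
  obtain ⟨C, hC⟩ := hbdd
  have habs : IsBoundedUnder (· ≤ ·) atTop fun L => |f L| :=
    isBoundedUnder_of_eventually_le (a := C) (eventually_gt_atTop 0 |>.mono hC)
  obtain ⟨hle, hge⟩ := isBoundedUnder_le_abs.1 habs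
  rcases (liminf_le_limsup hle hge).eq_or_lt with heq | hlt
  · exact ⟨_, tendsto_of_liminf_eq_limsup rfl heq.symm hle hge⟩
  refine absurd (hfin.subset fun c hc => ?_) (Ioo_infinite hlt)
  exact hf.infinite_level_of_frequently
    (frequently_lt_of_liminf_lt hle.isCoboundedUnder_ge hc.1)
    (frequently_lt_of_lt_limsup hge.isCoboundedUnder_le hc.2)

namespace ExtIL7RSteadyState

variable {K1 K2 K3 K4 Nx Ny Nz Nw L x y z w : ℝ}
  (h : ExtIL7RSteadyState K1 K2 K3 K4 Nx Ny Nz Nw L x y z w)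
include h

lemma quadratic_z : K1 * z ^ 2 + (1 + K1 * (Nx - Nz)) * z = Nz := by
  obtain ⟨e1, -, e3, -⟩ := h
  linear_combination (K1 * z) * e1 - (1 + K1 * z) * e3

lemma ny_sub_y : Ny - y = K2 * x * y * (1 + K1 * z) * (1 + K3 * L) := by
  linear_combination h.2.1

lemma nx_sub_ny_add_y : Nx - Ny + y = (1 + K1 * z) * x * (1 + K4 * w) := by
  linear_combination h.1 - h.2.1

lemma mul_y_mul_nx_sub_ny_add_y :
    K2 * (1 + K3 * L) * (y * (Nx - Ny + y)) = (1 + K4 * w) * (Ny - y) := by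
  rw [h.ny_sub_y, h.nx_sub_ny_add_y]
  ring

lemma w_le (hK1 : 0 ≤ K1) (hK4 : 0 ≤ K4) (hx : 0 ≤ x) (hz : 0 ≤ z) (hw : 0 ≤ w) : w ≤ Nw := by
  have : 0 ≤ K4 * x * w * (1 + K1 * z) := by positivity
  linarith [h.2.2.2]

lemma z_eq (hK1 : 0 < K1) (hNz : 0 ≤ Nz) (hz : 0 < z) :
    z = (-1 + K1*(Nz - Nx) + Real.sqrt ((1 + K1*(Nx - Nz))^2 + 4*K1*Nz)) / (2*K1) := by
  convert eq_quadratic_root_of_pos hK1 hNz hz h.quadratic_z using 3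
  ring

lemma signalling_eq (hK1 : 0 ≤ K1) (hK3 : 0 ≤ K3) (hL : 0 ≤ L) (hz : 0 ≤ z) :
    K1*K2*K3*L * x * y * z = (Ny - y) * (K1 * z / (1 + K1 * z)) * (K3 * L / (1 + K3 * L)) := by
  have : 0 < 1 + K1 * z := by positivity
  have : 0 < 1 + K3 * L := by positivity
  rw [h.ny_sub_y]
  field_simp

end ExtIL7RSteadyState

lemma ExtIL7RSteadyState.ny_sub_limit_eq_min {K1 K2 K3 K4 Nx Ny Nz Nw ℓ : ℝ} {x y z w : ℝ → ℝ}
    (hK1 : 0 ≤ K1) (hK2 : 0 < K2) (hK3 : 0 < K3) (hK4 : 0 ≤ K4)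
    (hxp : ∀ L, 0 < L → 0 < x L) (hyp : ∀ L, 0 < L → 0 < y L)
    (hzp : ∀ L, 0 < L → 0 < z L) (hwp : ∀ L, 0 < L → 0 < w L)
    (hss : ∀ L, 0 < L → ExtIL7RSteadyState K1 K2 K3 K4 Nx Ny Nz Nw L (x L) (y L) (z L) (w L))
    (hy : Tendsto y atTop (𝓝 ℓ)) :
    Ny - ℓ = min Nx Ny := by
  have hden : Tendsto (fun L : ℝ => K2 * (1 + K3 * L)) atTop atTop :=
    (tendsto_atTop_add_const_left _ 1 (tendsto_id.const_mul_atTop hK3)).const_mul_atTop hK2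
  have hgap : ∀ L, 0 < L → 0 < Nx - Ny + y L := fun L hL => by
    have hxL := hxp L hL; have hzL := hzp L hL; have hwL := hwp L hL
    rw [(hss L hL).nx_sub_ny_add_y]
    positivity
  have hprod : ∀ L, 0 < L →
      y L * (Nx - Ny + y L) ≤ (1 + K4 * Nw) * Ny / (K2 * (1 + K3 * L)) := fun L hL => by
    have hxL := hxp L hL; have hyL := hyp L hL; have hzL := hzp L hL; have hwL := hwp L hL
    have hNy : 0 ≤ Ny - y L := by rw [(hss L hL).ny_sub_y]; positivity
    have hwN : 1 + K4 * w L ≤ 1 + K4 * Nw := by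
      gcongr; exact (hss L hL).w_le hK1 hK4 hxL.le hzL.le hwL.le
    rw [le_div_iff₀ (by positivity), mul_comm, (hss L hL).mul_y_mul_nx_sub_ny_add_y]
    exact mul_le_mul hwN (by linarith) hNy ((by positivity : 0 < 1 + K4 * w L).le.trans hwN)
  have hzero : Tendsto (fun L => y L * (Nx - Ny + y L)) atTop (𝓝 0) :=
    squeeze_zero' (eventually_gt_atTop 0 |>.mono fun L hL => (mul_pos (hyp L hL) (hgap L hL)).le)
      (eventually_gt_atTop 0 |>.mono hprod) (tendsto_const_nhds.div_atTop hden)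
  have hgap_lim : Tendsto (fun L => Nx - Ny + y L) atTop (𝓝 (Nx - Ny + ℓ)) :=
    tendsto_const_nhds.add hy
  refine sub_eq_min_of_mul_eq_zero ?_ ?_ (tendsto_nhds_unique (hy.mul hgap_lim) hzero)
  · exact ge_of_tendsto hy (eventually_gt_atTop 0 |>.mono fun L hL => (hyp L hL).le)
  · exact ge_of_tendsto hgap_lim (eventually_gt_atTop 0 |>.mono fun L hL => (hgap L hL).le)

theorem ext_il7r_branch_amplitude_general
    (K1 K2 K3 K4 Nx Ny Nz Nw : ℝ)
    (hK1 : 0 < K1) (hK2 : 0 < K2) (hK3 : 0 < K3) (hK4 : 0 < K4)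
    (hNz : 0 < Nz)
    (x y z w : ℝ → ℝ)
    (hyc : ContinuousOn y (Set.Ioi 0))
    (hxp : ∀ L : ℝ, 0 < L → 0 < x L) (hyp : ∀ L : ℝ, 0 < L → 0 < y L)
    (hzp : ∀ L : ℝ, 0 < L → 0 < z L) (hwp : ∀ L : ℝ, 0 < L → 0 < w L)
    (hss : ∀ L : ℝ, 0 < L →
      ExtIL7RSteadyState K1 K2 K3 K4 Nx Ny Nz Nw L (x L) (y L) (z L) (w L))
    (hybdd : ∃ C : ℝ, ∀ L : ℝ, 0 < L → |y L| ≤ C)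
    (hyalg : AlgebraicOnIoi y) :
    (∀ L : ℝ, 0 < L →
      z L = (-1 + K1*(Nz - Nx) + Real.sqrt ((1 + K1*(Nx - Nz))^2 + 4*K1*Nz)) / (2*K1)) ∧
    Filter.Tendsto (fun L : ℝ => K1*K2*K3*L * x L * y L * z L) Filter.atTop
      (nhds (min Nx Ny * K1
          * ((-1 + K1*(Nz - Nx) + Real.sqrt ((1 + K1*(Nx - Nz))^2 + 4*K1*Nz)) / (2*K1))
          / (1 + K1
          * ((-1 + K1*(Nz - Nx) + Real.sqrt ((1 + K1*(Nx - Nz))^2 + 4*K1*Nz)) / (2*K1))))) := by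
  set zb := (-1 + K1*(Nz - Nx) + Real.sqrt ((1 + K1*(Nx - Nz))^2 + 4*K1*Nz)) / (2*K1)
  have hz : ∀ L, 0 < L → z L = zb := fun L hL => (hss L hL).z_eq hK1 hNz.le (hzp L hL)
  refine ⟨hz, ?_⟩
  obtain ⟨ℓ, hℓ⟩ :=
    exists_tendsto_of_finite_setOf_infinite_level hyc hybdd hyalg.finite_setOf_infinite_level
  have hNy : Tendsto (fun L => Ny - y L) atTop (𝓝 (min Nx Ny)) := by
    rw [← ExtIL7RSteadyState.ny_sub_limit_eq_min hK1.le hK2 hK3 hK4.le hxp hyp hzp hwp hss hℓ]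
    exact tendsto_const_nhds.sub hℓ
  have hσ : Tendsto (fun L => (Ny - y L) * (K1 * zb / (1 + K1 * zb)) * (K3 * L / (1 + K3 * L)))
      atTop (𝓝 (min Nx Ny * K1 * zb / (1 + K1 * zb))) := by
    convert (hNy.mul_const _).mul (tendsto_mul_div_one_add_mul_atTop hK3) using 2
    ring
  refine hσ.congr' (eventually_gt_atTop 0 |>.mono fun L hL => ?_)
  rw [← hz L hL]
  exact ((hss L hL).signalling_eq hK1.le hK3.le hL.le (hzp L hL).le).symm

/-- along any continuous positive steady-state branch of the extended
IL-7R model with `y` bounded and algebraic, the kinase concentration is constant and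
equal to `z̄`, and the signalling function converges to the amplitude
`min(Nx,Ny)·K1·z̄/(1 + K1·z̄)` as `L → +∞`. -/
theorem ext_il7r_branch_amplitude
    (K1 K2 K3 K4 Nx Ny Nz Nw : ℝ)
    (hK1 : 0 < K1) (hK2 : 0 < K2) (hK3 : 0 < K3) (hK4 : 0 < K4)
    (hNx : 0 < Nx) (hNy : 0 < Ny) (hNz : 0 < Nz) (hNw : 0 < Nw)
    (x y z w : ℝ → ℝ)
    (hxc : ContinuousOn x (Set.Ioi 0)) (hyc : ContinuousOn y (Set.Ioi 0))
    (hzc : ContinuousOn z (Set.Ioi 0)) (hwc : ContinuousOn w (Set.Ioi 0))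
    (hxp : ∀ L : ℝ, 0 < L → 0 < x L) (hyp : ∀ L : ℝ, 0 < L → 0 < y L)
    (hzp : ∀ L : ℝ, 0 < L → 0 < z L) (hwp : ∀ L : ℝ, 0 < L → 0 < w L)
    (hss : ∀ L : ℝ, 0 < L →
      ExtIL7RSteadyState K1 K2 K3 K4 Nx Ny Nz Nw L (x L) (y L) (z L) (w L))
    (hybdd : ∃ C : ℝ, ∀ L : ℝ, 0 < L → |y L| ≤ C)
    (hyalg : AlgebraicOnIoi y) :
    (∀ L : ℝ, 0 < L →
      z L = (-1 + K1*(Nz - Nx) + Real.sqrt ((1 + K1*(Nx - Nz))^2 + 4*K1*Nz)) / (2*K1)) ∧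
    Filter.Tendsto (fun L : ℝ => K1*K2*K3*L * x L * y L * z L) Filter.atTop
      (nhds (min Nx Ny * K1
          * ((-1 + K1*(Nz - Nx) + Real.sqrt ((1 + K1*(Nx - Nz))^2 + 4*K1*Nz)) / (2*K1))
          / (1 + K1
          * ((-1 + K1*(Nz - Nx) + Real.sqrt ((1 + K1*(Nx - Nz))^2 + 4*K1*Nz)) / (2*K1))))) :=
  ext_il7r_branch_amplitude_general K1 K2 K3 K4 Nx Ny Nz Nw hK1 hK2 hK3 hK4 hNz x y z w hyc hxp hyp
    hzp hwp hss hybdd hyalg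
end

section
/- For any SRLK steady-state branch, the signalling function σ(L) = K_0·z(L)·L·Π_{j=1}^{n}(K_j·x_j(L)) and the dummy function δ(L) = L·Π_{j=1}^{n}(K_j'·x_j(L)) converge to finite limits as L → +∞, and both of these limits are strictly positive. -/
/-! SRLK model with `n+1` trans-membrane chains `X_1, …, X_{n+1}` (indexed by
`Fin (n+1)`, so the paper's "`n ≥ 1` chains" corresponds to `n+1` here), an extrinsic
kinase `Z` with affinity `K0`, signalling affinities `K i`, dummy affinities `K' i`,
and total copy numbers `Nz` and `N i`. -/

/-- The signalling function `σ = K0·z·L·Π_j (K_j·x_j)`. -/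
def srlkSigma (n : ℕ) (K0 : ℝ) (K : Fin (n+1) → ℝ) (z L : ℝ)
    (x : Fin (n+1) → ℝ) : ℝ :=
  K0 * z * L * ∏ j, (K j * x j)

/-- The dummy function `δ = L·Π_j (K'_j·x_j)`. -/
def srlkDelta (n : ℕ) (K' : Fin (n+1) → ℝ) (L : ℝ) (x : Fin (n+1) → ℝ) : ℝ :=
  L * ∏ j, (K' j * x j)

/-- The SRLK steady-state equations at ligand concentration `L`. -/
def srlkSteady (n : ℕ) (K0 : ℝ) (K K' : Fin (n+1) → ℝ) (Nz : ℝ)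
    (N : Fin (n+1) → ℝ) (L z : ℝ) (x : Fin (n+1) → ℝ) : Prop :=
  Nz = z + K0 * z * (x 0 + ∑ j ∈ Finset.Ioi (0 : Fin (n+1)),
      (∏ l ∈ Finset.Iio j, (K l * x l)) * x j) + srlkSigma n K0 K z L x ∧
  N 0 = x 0 + (∑ j ∈ Finset.Ioi (0 : Fin (n+1)),
        (∏ l ∈ Finset.Iio j, (K' l * x l)) * x j)
      + srlkDelta n K' L x
      + K0 * z * (x 0 + ∑ j ∈ Finset.Ioi (0 : Fin (n+1)),
        (∏ l ∈ Finset.Iio j, (K l * x l)) * x j)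
      + srlkSigma n K0 K z L x ∧
  ∀ i : Fin (n+1), 0 < i →
    N i = x i + (∑ j ∈ Finset.Ici i,
        ((∏ l ∈ Finset.Iio j, (K' l * x l)) * x j
          + K0 * z * (∏ l ∈ Finset.Iio j, (K l * x l)) * x j))
      + srlkDelta n K' L x + srlkSigma n K0 K z L x

/-- An SRLK steady-state branch: continuous positive functions `z, x_1, …, x_{n+1}` on
`(0, ∞)` satisfying the SRLK steady-state equations for every `L > 0`, with
`z`, each `x_i`, `σ` and `δ` bounded and algebraic on `(0, ∞)`. -/
structure SRLKBranch (n : ℕ) (K0 : ℝ) (K K' : Fin (n+1) → ℝ) (Nz : ℝ)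
    (N : Fin (n+1) → ℝ) (z : ℝ → ℝ) (x : Fin (n+1) → ℝ → ℝ) : Prop where
  contZ : ContinuousOn z (Set.Ioi 0)
  contX : ∀ i, ContinuousOn (x i) (Set.Ioi 0)
  posZ : ∀ L : ℝ, 0 < L → 0 < z L
  posX : ∀ i, ∀ L : ℝ, 0 < L → 0 < x i L
  steady : ∀ L : ℝ, 0 < L → srlkSteady n K0 K K' Nz N L (z L) (fun i => x i L)
  bddZ : ∃ C : ℝ, ∀ L : ℝ, 0 < L → |z L| ≤ C
  bddX : ∀ i, ∃ C : ℝ, ∀ L : ℝ, 0 < L → |x i L| ≤ C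
  bddSigma : ∃ C : ℝ, ∀ L : ℝ, 0 < L →
    |srlkSigma n K0 K (z L) L (fun i => x i L)| ≤ C
  bddDelta : ∃ C : ℝ, ∀ L : ℝ, 0 < L → |srlkDelta n K' L (fun i => x i L)| ≤ C
  algZ : AlgebraicOnIoi z
  algX : ∀ i, AlgebraicOnIoi (x i)
  algSigma : AlgebraicOnIoi (fun L => srlkSigma n K0 K (z L) L (fun i => x i L))
  algDelta : AlgebraicOnIoi (fun L => srlkDelta n K' L (fun i => x i L))

/-!
A bounded continuous function `f` on `(0, ∞)` with `F(L, f L) = 0` for a nonzero bivariate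
polynomial `F` converges as `L → ∞`: otherwise every value `c` strictly between its liminf and
limsup is taken at arbitrarily large `L` (intermediate value theorem), so `F(·, c) = 0` for
infinitely many `c`, which is impossible. Hence `z`, the `x_i`, `σ` and `δ` have limits.
Since `δ / L = ∏ K'_j x_j → 0`, some `x_i` tends to `0`; every term of the `i`-th conservation
law other than `δ + σ` carries the factor `x_i`, so `N_i = lim δ + lim σ`. Finally
`σ ∏ K'_j = K_0 (∏ K_j) z δ`: if `lim σ = 0` then `lim δ = N_i > 0` forces `lim z = 0`, and the
`N_z` law gives `N_z = 0`; so `lim σ > 0`, and then `lim δ > 0` by the same identity.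
-/

open Filter Topology Polynomial
open scoped Polynomial.Bivariate

theorem Polynomial.finite_setOf_eval_C_eq_zero {R : Type*} [CommRing R] [IsDomain R] [Infinite R]
    {F : R[X][Y]} (hF : F ≠ 0) : {y : R | F.eval (C y) = 0}.Finite := by
  obtain ⟨x, hx⟩ : ∃ x, F.map (evalRingHom x) ≠ 0 := by
    by_contra! h
    have hlead : F.leadingCoeff = 0 :=
      zero_of_eval_zero _ fun x => by simpa using congr_arg (coeff · F.natDegree) (h x)
    exact hF (leadingCoeff_eq_zero.1 hlead)
  refine (finite_setOfPred_isRoot hx).subset fun y hy => ?_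
  rw [Set.mem_ofPred_eq] at hy
  simp [IsRoot, map_evalRingHom_eval, evalEval, hy]

theorem Filter.frequently_atTop_eq_of_continuousOn {f : ℝ → ℝ} {a c : ℝ}
    (hf : ContinuousOn f (Set.Ioi a)) (hlt : ∃ᶠ t in atTop, f t < c)
    (hgt : ∃ᶠ t in atTop, c < f t) : ∃ᶠ t in atTop, f t = c := by
  refine frequently_atTop.2 fun M => ?_
  set M' := max M (a + 1)
  obtain ⟨t₁, ht₁, hft₁⟩ := frequently_atTop.1 hlt M'
  obtain ⟨t₂, ht₂, hft₂⟩ := frequently_atTop.1 hgt M'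
  have hsub : Set.Ici M' ⊆ Set.Ioi a := fun t ht =>
    (lt_add_one a).trans_le ((le_max_right _ _).trans ht)
  obtain ⟨t, ht, rfl⟩ := isPreconnected_Ici.intermediate_value ht₁ ht₂ (hf.mono hsub)
    ⟨hft₁.le, hft₂.le⟩
  exact ⟨t, (le_max_left _ _).trans ht, rfl⟩

theorem exists_tendsto_atTop_of_evalEval_eq_zero {f : ℝ → ℝ} {a : ℝ} {F : ℝ[X][Y]} (hF : F ≠ 0)
    (hf : ContinuousOn f (Set.Ioi a)) (hb : IsBoundedUnder (· ≤ ·) atTop fun t => |f t|)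
    (hfF : ∀ᶠ t in atTop, F.evalEval t (f t) = 0) : ∃ c, Tendsto f atTop (𝓝 c) := by
  obtain ⟨hle, hge⟩ := isBoundedUnder_le_abs.1 hb
  rcases (liminf_le_limsup hle hge).eq_or_lt with h | h
  · exact ⟨_, tendsto_of_liminf_eq_limsup h rfl hle hge⟩
  -- every value strictly between the liminf and the limsup is a root of `F(·, c)`
  refine absurd ((Polynomial.finite_setOf_eval_C_eq_zero hF).subset fun c hc => ?_)
    (Set.Ioo_infinite h)
  have hfreq : ∃ᶠ t in atTop, F.evalEval t c = 0 := by
    refine ((frequently_atTop_eq_of_continuousOn hf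
      (frequently_lt_of_liminf_lt hle.isCoboundedUnder_ge hc.1)
      (frequently_lt_of_lt_limsup hge.isCoboundedUnder_le hc.2)).and_eventually hfF).mono ?_
    rintro t ⟨rfl, ht⟩
    exact ht
  refine eq_zero_of_infinite_isRoot _ (Set.infinite_of_not_bddAbove fun ⟨M, hM⟩ => ?_)
  obtain ⟨t, ht, htM⟩ := (hfreq.and_eventually (eventually_gt_atTop M)).exists
  exact (hM ht).not_gt htM

theorem AlgebraicOnIoi.exists_evalEval_eq_zero {f : ℝ → ℝ} (hf : AlgebraicOnIoi f) :
    ∃ F : ℝ[X][Y], F ≠ 0 ∧ ∀ t, 0 < t → F.evalEval t (f t) = 0 := by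
  obtain ⟨m, -, p, q, hq, hpq⟩ := hf
  -- clear the denominators `q i` of the monic relation
  refine ⟨C (∏ j, q j) * Y ^ m + ∑ i, C (p i * ∏ j ∈ Finset.univ.erase i, q j) * Y ^ (i : ℕ),
    fun hF => ?_, fun t ht => ?_⟩
  · have hcoeff := congr_arg (coeff · m) hF
    simp only [coeff_add, coeff_C_mul_X_pow, if_true, finsetSum_coeff, coeff_zero] at hcoeff
    rw [Finset.sum_eq_zero fun i _ => if_neg (Nat.ne_of_gt i.isLt), add_zero] at hcoeff
    have := congr_arg (eval 1) hcoeff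
    rw [eval_prod, eval_zero] at this
    exact Finset.prod_ne_zero_iff.2 (fun i _ => hq i 1 one_pos) this
  · have hqt : ∀ i, (q i).eval t ≠ 0 := fun i => hq i t ht
    calc _ = (∏ j, (q j).eval t) *
          (f t ^ m + ∑ i, (p i).eval t / (q i).eval t * f t ^ (i : ℕ)) := by
          simp only [evalEval_add, evalEval_mul, evalEval_C, evalEval_pow, evalEval_X,
            evalEval_finsetSum, eval_mul, eval_prod, mul_add, Finset.mul_sum]
          congr 1
          refine Finset.sum_congr rfl fun i _ => ?_
          rw [← Finset.mul_prod_erase _ (fun j => (q j).eval t) (Finset.mem_univ i)]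
          field_simp [hqt i]
      _ = 0 := by rw [hpq t ht, mul_zero]

theorem AlgebraicOnIoi.exists_tendsto_atTop {f : ℝ → ℝ} (hf : AlgebraicOnIoi f)
    (hc : ContinuousOn f (Set.Ioi 0)) (hb : ∃ C : ℝ, ∀ t : ℝ, 0 < t → |f t| ≤ C) :
    ∃ c, Tendsto f atTop (𝓝 c) := by
  obtain ⟨F, hF, hfF⟩ := hf.exists_evalEval_eq_zero
  obtain ⟨C, hC⟩ := hb
  exact exists_tendsto_atTop_of_evalEval_eq_zero hF hc
    ⟨C, eventually_map.2 ((eventually_gt_atTop 0).mono hC)⟩ ((eventually_gt_atTop 0).mono hfF)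

def srlkChain {n : ℕ} (w y : Fin (n+1) → ℝ) (i : Fin (n+1)) : ℝ :=
  ∑ j ∈ Finset.Ici i, (∏ l ∈ Finset.Iio j, w l * y l) * y j

section srlkChain

variable {n : ℕ} {w y : Fin (n+1) → ℝ}

theorem srlkChain_zero :
    srlkChain w y 0 = y 0 + ∑ j ∈ Finset.Ioi 0, (∏ l ∈ Finset.Iio j, w l * y l) * y j := by
  rw [srlkChain, ← Finset.Ioi_insert, Finset.sum_insert Finset.notMem_Ioi_self,
    show Finset.Iio (0 : Fin (n+1)) = ∅ from Finset.Iio_bot, Finset.prod_empty, one_mul]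

theorem srlkChain_eq_zero {i : Fin (n+1)} (hi : y i = 0) : srlkChain w y i = 0 := by
  refine Finset.sum_eq_zero fun j hj => ?_
  rcases (Finset.mem_Ici.1 hj).eq_or_lt with rfl | hij
  · rw [hi, mul_zero]
  · rw [Finset.prod_eq_zero (Finset.mem_Iio.2 hij) (by rw [hi, mul_zero]), zero_mul]

theorem tendsto_srlkChain {α : Type*} {l : Filter α} {y : Fin (n+1) → α → ℝ}
    {c : Fin (n+1) → ℝ} (hy : ∀ j, Tendsto (y j) l (𝓝 (c j))) (i : Fin (n+1)) :
    Tendsto (fun t => srlkChain w (fun j => y j t) i) l (𝓝 (srlkChain w c i)) :=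
  tendsto_finsetSum _ fun j _ =>
    (tendsto_finsetProd _ fun k _ => tendsto_const_nhds.mul (hy k)).mul (hy j)

end srlkChain

section srlkSteady

variable {n : ℕ} {K0 Nz L z : ℝ} {K K' N x : Fin (n+1) → ℝ}

theorem srlkSteady.nz_eq (h : srlkSteady n K0 K K' Nz N L z x) :
    Nz = z + K0 * z * srlkChain K x 0 + srlkSigma n K0 K z L x := by
  rw [srlkChain_zero]
  exact h.1

-- For `i = 0` the free `x 0` is already the `j = 0` term of the chain.
theorem srlkSteady.n_eq (h : srlkSteady n K0 K K' Nz N L z x) (i : Fin (n+1)) :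
    N i = (if i = 0 then 0 else x i) + srlkChain K' x i + K0 * z * srlkChain K x i
      + srlkDelta n K' L x + srlkSigma n K0 K z L x := by
  split_ifs with hi
  · subst hi
    rw [srlkChain_zero, srlkChain_zero, h.2.1]
    ring
  · rw [h.2.2 i (Fin.pos_iff_ne_zero.2 hi), srlkChain, srlkChain]
    simp only [Finset.sum_add_distrib, Finset.mul_sum, mul_assoc, add_assoc]

end srlkSteady

theorem srlkSigma_mul_prod (n : ℕ) (K0 : ℝ) (K K' : Fin (n+1) → ℝ) (z L : ℝ)
    (x : Fin (n+1) → ℝ) :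
    srlkSigma n K0 K z L x * ∏ j, K' j = K0 * (∏ j, K j) * z * srlkDelta n K' L x := by
  simp only [srlkSigma, srlkDelta, Finset.prod_mul_distrib]
  ring

theorem srlkSigma_pos {n : ℕ} {K0 z L : ℝ} {K x : Fin (n+1) → ℝ} (hK0 : 0 < K0)
    (hK : ∀ i, 0 < K i) (hz : 0 < z) (hL : 0 < L) (hx : ∀ i, 0 < x i) :
    0 < srlkSigma n K0 K z L x := by
  unfold srlkSigma
  have := Finset.prod_pos fun j (_ : j ∈ Finset.univ) => mul_pos (hK j) (hx j)
  positivity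

theorem srlkDelta_pos {n : ℕ} {L : ℝ} {K' x : Fin (n+1) → ℝ}
    (hK' : ∀ i, 0 < K' i) (hL : 0 < L) (hx : ∀ i, 0 < x i) : 0 < srlkDelta n K' L x :=
  mul_pos hL (Finset.prod_pos fun j _ => mul_pos (hK' j) (hx j))

theorem exists_eq_zero_of_tendsto_srlkDelta {n : ℕ} {K' : Fin (n+1) → ℝ}
    (hK' : ∀ i, K' i ≠ 0) {x : Fin (n+1) → ℝ → ℝ} {c : Fin (n+1) → ℝ} {d : ℝ}
    (hx : ∀ i, Tendsto (x i) atTop (𝓝 (c i)))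
    (hd : Tendsto (fun L => srlkDelta n K' L (fun i => x i L)) atTop (𝓝 d)) :
    ∃ i, c i = 0 := by
  have hprod : Tendsto (fun L => ∏ j, K' j * x j L) atTop (𝓝 (∏ j, K' j * c j)) :=
    tendsto_finsetProd _ fun j _ => tendsto_const_nhds.mul (hx j)
  have hquot : Tendsto (fun L => srlkDelta n K' L (fun i => x i L) * L⁻¹) atTop (𝓝 0) := by
    simpa using hd.mul tendsto_inv_atTop_zero
  have hzero : ∏ j, K' j * c j = 0 := by
    refine tendsto_nhds_unique (hprod.congr' ?_) hquot
    filter_upwards [eventually_gt_atTop 0] with L hL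
    rw [srlkDelta, mul_comm L, mul_assoc, mul_inv_cancel₀ hL.ne', mul_one]
  obtain ⟨i, -, hi⟩ := Finset.prod_eq_zero_iff.1 hzero
  exact ⟨i, (mul_eq_zero.1 hi).resolve_left (hK' i)⟩

theorem srlkSigma_mul_prod_of_tendsto {n : ℕ} {K0 : ℝ} {K K' : Fin (n+1) → ℝ} {z : ℝ → ℝ}
    {x : Fin (n+1) → ℝ → ℝ} {s zl d : ℝ}
    (hs : Tendsto (fun L => srlkSigma n K0 K (z L) L (fun i => x i L)) atTop (𝓝 s))
    (hz : Tendsto z atTop (𝓝 zl))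
    (hd : Tendsto (fun L => srlkDelta n K' L (fun i => x i L)) atTop (𝓝 d)) :
    s * ∏ j, K' j = K0 * (∏ j, K j) * zl * d :=
  tendsto_nhds_unique_of_eventuallyEq (hs.mul_const _) ((tendsto_const_nhds.mul hz).mul hd)
    (Eventually.of_forall fun L => srlkSigma_mul_prod n K0 K K' (z L) L _)

namespace SRLKBranch

variable {n : ℕ} {K0 Nz : ℝ} {K K' N : Fin (n+1) → ℝ} {z : ℝ → ℝ} {x : Fin (n+1) → ℝ → ℝ}

theorem exists_tendsto_sigma (hbr : SRLKBranch n K0 K K' Nz N z x) :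
    ∃ s, Tendsto (fun L => srlkSigma n K0 K (z L) L (fun i => x i L)) atTop (𝓝 s) :=
  hbr.algSigma.exists_tendsto_atTop (((continuousOn_const.mul hbr.contZ).mul continuousOn_id).mul
    (continuousOn_finsetProd _ fun j _ => continuousOn_const.mul (hbr.contX j))) hbr.bddSigma

theorem exists_tendsto_delta (hbr : SRLKBranch n K0 K K' Nz N z x) :
    ∃ d, Tendsto (fun L => srlkDelta n K' L (fun i => x i L)) atTop (𝓝 d) :=
  hbr.algDelta.exists_tendsto_atTop (continuousOn_id.mul
    (continuousOn_finsetProd _ fun j _ => continuousOn_const.mul (hbr.contX j))) hbr.bddDelta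

variable {zl : ℝ} {xl : Fin (n+1) → ℝ}

theorem nz_eq_of_tendsto (hbr : SRLKBranch n K0 K K' Nz N z x) {s : ℝ}
    (hz : Tendsto z atTop (𝓝 zl)) (hx : ∀ i, Tendsto (x i) atTop (𝓝 (xl i)))
    (hs : Tendsto (fun L => srlkSigma n K0 K (z L) L (fun i => x i L)) atTop (𝓝 s)) :
    Nz = zl + K0 * zl * srlkChain K xl 0 + s :=
  tendsto_nhds_unique_of_eventuallyEq tendsto_const_nhds
    ((hz.add ((tendsto_const_nhds.mul hz).mul (tendsto_srlkChain hx 0))).add hs)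
    ((eventually_gt_atTop 0).mono fun L hL => (hbr.steady L hL).nz_eq)

theorem n_eq_add_of_tendsto (hbr : SRLKBranch n K0 K K' Nz N z x) {s d : ℝ}
    (hz : Tendsto z atTop (𝓝 zl)) (hx : ∀ i, Tendsto (x i) atTop (𝓝 (xl i)))
    (hd : Tendsto (fun L => srlkDelta n K' L (fun i => x i L)) atTop (𝓝 d))
    (hs : Tendsto (fun L => srlkSigma n K0 K (z L) L (fun i => x i L)) atTop (𝓝 s))
    {i : Fin (n+1)} (hi : xl i = 0) : N i = d + s := by
  have hfree : Tendsto (fun L => if i = 0 then 0 else x i L) atTop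
      (𝓝 (if i = 0 then 0 else xl i)) := by
    split_ifs
    exacts [tendsto_const_nhds, hx i]
  have hNi := tendsto_nhds_unique_of_eventuallyEq tendsto_const_nhds
    ((((hfree.add (tendsto_srlkChain hx i)).add
      ((tendsto_const_nhds.mul hz).mul (tendsto_srlkChain hx i))).add hd).add hs)
    ((eventually_gt_atTop 0).mono fun L hL => (hbr.steady L hL).n_eq i)
  rw [hNi, srlkChain_eq_zero hi, srlkChain_eq_zero hi, hi, ite_self]
  ring

end SRLKBranch

/-- along any SRLK steady-state branch, the signalling and dummy
functions converge to finite, strictly positive limits as `L → +∞`. -/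
theorem srlk_sigma_delta_positive_limits
    (n : ℕ) (K0 : ℝ) (K K' : Fin (n+1) → ℝ) (Nz : ℝ) (N : Fin (n+1) → ℝ)
    (hK0 : 0 < K0) (hK : ∀ i, 0 < K i) (hK' : ∀ i, 0 < K' i)
    (hNz : 0 < Nz) (hN : ∀ i, 0 < N i)
    (z : ℝ → ℝ) (x : Fin (n+1) → ℝ → ℝ)
    (hbr : SRLKBranch n K0 K K' Nz N z x) :
    (∃ c : ℝ, 0 < c ∧
      Filter.Tendsto (fun L => srlkSigma n K0 K (z L) L (fun i => x i L))
        Filter.atTop (nhds c)) ∧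
    (∃ c : ℝ, 0 < c ∧
      Filter.Tendsto (fun L => srlkDelta n K' L (fun i => x i L))
        Filter.atTop (nhds c)) := by
  obtain ⟨s, hs⟩ := hbr.exists_tendsto_sigma
  obtain ⟨d, hd⟩ := hbr.exists_tendsto_delta
  obtain ⟨zl, hz⟩ := hbr.algZ.exists_tendsto_atTop hbr.contZ hbr.bddZ
  choose xl hx using fun i => (hbr.algX i).exists_tendsto_atTop (hbr.contX i) (hbr.bddX i)
  have hs0 : 0 ≤ s := ge_of_tendsto hs <| (eventually_gt_atTop 0).mono fun L hL =>
    (srlkSigma_pos hK0 hK (hbr.posZ L hL) hL fun i => hbr.posX i L hL).le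
  have hd0 : 0 ≤ d := ge_of_tendsto hd <| (eventually_gt_atTop 0).mono fun L hL =>
    (srlkDelta_pos hK' hL fun i => hbr.posX i L hL).le
  obtain ⟨i, hi⟩ := exists_eq_zero_of_tendsto_srlkDelta (fun i => (hK' i).ne') hx hd
  have hNi_lim : N i = d + s := hbr.n_eq_add_of_tendsto hz hx hd hs hi
  have hNz_lim : Nz = zl + K0 * zl * srlkChain K xl 0 + s := hbr.nz_eq_of_tendsto hz hx hs
  have hsd : s * ∏ j, K' j = K0 * (∏ j, K j) * zl * d := srlkSigma_mul_prod_of_tendsto hs hz hd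
  have hKpos : 0 < K0 * ∏ j, K j := mul_pos hK0 (Finset.prod_pos fun j _ => hK j)
  have hK'pos : 0 < ∏ j, K' j := Finset.prod_pos fun j _ => hK' j
  have hspos : 0 < s := by
    refine hs0.lt_of_ne fun hs_eq => hNz.ne' ?_
    have hdpos : 0 < d := by linarith [hN i]
    have hzl : zl = 0 := by
      have h : K0 * (∏ j, K j) * zl * d = 0 := by rw [← hsd, ← hs_eq, zero_mul]
      simpa [hKpos.ne', hdpos.ne'] using h
    rw [hNz_lim, hzl, ← hs_eq]
    ring
  refine ⟨⟨s, hspos, hs⟩, ⟨d, hd0.lt_of_ne fun hd_eq => ?_, hd⟩⟩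
  rw [← hd_eq, mul_zero] at hsd
  exact (mul_pos hspos hK'pos).ne' hsd
end

section
/- Fix an integer n ≥ 1 and positive real parameters K_0, K_1, …, K_n, K_1', …, K_n', N_z, N_1, …, N_n with no allostery, i.e. K_i = K_i' for all i = 1, …, n. If positive reals z, x_1, …, x_n satisfy the SRLK steady-state equations at some ligand concentration L > 0, then K_0·z² + (1 + K_0·(N_1 − N_z))·z − N_z = 0, and consequently z = (−1 + K_0·(N_z − N_1) + √((1 + K_0·(N_1 − N_z))² + 4·K_0·N_z))/(2·K_0); in particular the value of z does not depend on L. -/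
/-!
Without allostery the dummy and signalling sums coincide, so with `T` the total amount of
chain `X_1` not bound to the kinase, the first two conservation laws read
`N_1 = (1 + K_0 z) T` and `N_z = z + K_0 z T`. Eliminating `T` leaves a quadratic in `z`
alone, whose positive root is the stated formula.
-/

theorem eq_quadratic_pos_root {a b c z : ℝ} (ha : 0 < a) (hc : 0 ≤ c) (hz : 0 < z)
    (h : a * z ^ 2 + b * z - c = 0) :
    z = (-b + √(b ^ 2 + 4 * a * c)) / (2 * a) := by
  have hsq : (2 * a * z + b) ^ 2 = b ^ 2 + 4 * a * c := by linear_combination 4 * a * h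
  have hfactor : z * (a * z + b) = c := by linear_combination h
  have hlin : 0 ≤ a * z + b := nonneg_of_mul_nonneg_right (hfactor ▸ hc) hz
  have hroot : √(b ^ 2 + 4 * a * c) = 2 * a * z + b := by
    rw [← hsq]
    exact Real.sqrt_sq (by linarith [mul_pos ha hz])
  rw [hroot]
  field_simp
  ring

namespace srlkSteady

variable {n : ℕ} {K0 : ℝ} {K : Fin (n+1) → ℝ} {Nz : ℝ} {N : Fin (n+1) → ℝ} {L z : ℝ}
  {x : Fin (n+1) → ℝ}

theorem exists_free_occupancy (h : srlkSteady n K0 K K Nz N L z x) :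
    ∃ T, Nz = z + K0 * z * T ∧ N 0 = (1 + K0 * z) * T := by
  obtain ⟨hNz, hN0, -⟩ := h
  refine ⟨x 0 + (∑ j ∈ Finset.Ioi (0 : Fin (n+1)), (∏ l ∈ Finset.Iio j, (K l * x l)) * x j)
    + srlkDelta n K L x, ?_, ?_⟩
  · rw [hNz, srlkSigma, srlkDelta]; ring
  · rw [hN0, srlkSigma, srlkDelta]; ring

theorem kinase_quadratic (h : srlkSteady n K0 K K Nz N L z x) :
    K0 * z ^ 2 + (1 + K0 * (N 0 - Nz)) * z - Nz = 0 := by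
  obtain ⟨T, hNz, hN0⟩ := h.exists_free_occupancy
  linear_combination (-(K0 * z + 1)) * hNz + K0 * z * hN0

end srlkSteady

theorem srlk_no_allostery_kinase_formula_general
    (n : ℕ) (K0 : ℝ) (K K' : Fin (n+1) → ℝ) (Nz : ℝ) (N : Fin (n+1) → ℝ)
    (hK0 : 0 < K0)
    (hNz : 0 < Nz)
    (hna : ∀ i, K i = K' i)
    (L z : ℝ) (x : Fin (n+1) → ℝ)
    (hz : 0 < z)
    (hss : srlkSteady n K0 K K' Nz N L z x) :
    K0*z^2 + (1 + K0*(N 0 - Nz))*z - Nz = 0 ∧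
    z = (-1 + K0*(Nz - N 0)
          + Real.sqrt ((1 + K0*(N 0 - Nz))^2 + 4*K0*Nz)) / (2*K0) := by
  obtain rfl : K = K' := funext hna
  have hq := hss.kinase_quadratic
  refine ⟨hq, (eq_quadratic_pos_root hK0 hNz.le hz hq).trans ?_⟩
  ring

/-- in an SRLK model with no allostery (`K_i = K_i'`), the kinase
concentration at any positive steady state satisfies an `L`-independent quadratic and
is given by the explicit formula; in particular it does not depend on `L`. -/
theorem srlk_no_allostery_kinase_formula
    (n : ℕ) (K0 : ℝ) (K K' : Fin (n+1) → ℝ) (Nz : ℝ) (N : Fin (n+1) → ℝ)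
    (hK0 : 0 < K0) (hK : ∀ i, 0 < K i) (hK' : ∀ i, 0 < K' i)
    (hNz : 0 < Nz) (hN : ∀ i, 0 < N i)
    (hna : ∀ i, K i = K' i)
    (L z : ℝ) (x : Fin (n+1) → ℝ)
    (hL : 0 < L) (hz : 0 < z) (hx : ∀ i, 0 < x i)
    (hss : srlkSteady n K0 K K' Nz N L z x) :
    K0*z^2 + (1 + K0*(N 0 - Nz))*z - Nz = 0 ∧
    z = (-1 + K0*(Nz - N 0)
          + Real.sqrt ((1 + K0*(N 0 - Nz))^2 + 4*K0*Nz)) / (2*K0) :=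
  srlk_no_allostery_kinase_formula_general n K0 K K' Nz N hK0 hNz hna L z x hz hss
end
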